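/- Let μ ∈ P_+, let q > 0 with q ≠ 1, let k_α > 0 be W-invariant parameters, set t_α = q^{k_α}, and let ε ∈ {+1, −1}. Then Σ_{μ̃∈W(μ)} ∏_{α^∨∈R^∨_{w_μ̃}} t_α(1 − t_α^{−1} q^{ε⟨α^∨, μ+ρ_k⟩})/(1 − t_α q^{ε⟨α^∨, μ+ρ_k⟩}) = W(t) · ∏_{α∈R_+} (1 − q^{ε⟨α^∨, μ+ρ_k⟩})/(1 − t_α q^{ε⟨α^∨, μ+ρ_k⟩}), where W(t) = Σ_{w∈W} ∏_{α^∨∈R_w^∨} t_α is the Poincaré polynomial of the Weyl group, provided all denominators are nonzero. -/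

import Mathlib

open scoped BigOperators RealInnerProductSpace
open Classical MeasureTheory

noncomputable section

namespace HO

variable {V : Type*} [NormedAddCommGroup V] [InnerProductSpace ℝ V] [FiniteDimensional ℝ V]

/-- The coroot `α^∨ = 2α/⟨α,α⟩` of a vector `α`. -/
def coroot (α : V) : V := (2 / ⟪α, α⟫) • α

/-- The orthogonal reflection `s_α(v) = v - ⟨α^∨,v⟩ α`. -/
def sRefl (α : V) : V → V := fun v => v - ⟪coroot α, v⟫ • α

/-- Data of an irreducible reduced crystallographic root system `R` in the Euclidean
space `V`, with a fixed basis of simple roots `simple : Fin N → V` and the corresponding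
set of positive roots `Rplus`. -/
structure RootSystemData (V : Type*) [NormedAddCommGroup V] [InnerProductSpace ℝ V]
    [FiniteDimensional ℝ V] (N : ℕ) : Type _ where
  R : Finset V
  Rplus : Finset V
  simple : Fin N → V
  nonzero : ∀ α ∈ R, α ≠ 0
  Rplus_subset : Rplus ⊆ R
  decomp : ∀ α ∈ R, (α ∈ Rplus ∧ -α ∉ Rplus) ∨ (α ∉ Rplus ∧ -α ∈ Rplus)
  simple_mem : ∀ i, simple i ∈ Rplus
  simple_li : LinearIndependent ℝ simple
  simple_span : Submodule.span ℝ (Set.range simple) = ⊤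
  pos_combo : ∀ α ∈ Rplus, ∃ c : Fin N → ℕ, α = ∑ i, (c i : ℝ) • simple i
  reflect_mem : ∀ α ∈ R, ∀ β ∈ R, sRefl α β ∈ R
  crystal : ∀ α ∈ R, ∀ β ∈ R, ∃ n : ℤ, ⟪coroot α, β⟫ = (n : ℝ)
  reduced : ∀ α ∈ R, ∀ c : ℝ, c • α ∈ R → c = 1 ∨ c = -1
  irreducible : ∀ S : Finset V, S ⊆ R → (∀ α ∈ S, ∀ β ∈ R, β ∉ S → ⟪α, β⟫ = 0) →
    S = ∅ ∨ S = R

namespace RootSystemData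

variable {N : ℕ} (Δ : RootSystemData V N)

/-- The Weyl group `W`, generated by the reflections in the roots. -/
def weylGroup : Subgroup (V ≃ₗ[ℝ] V) :=
  Subgroup.closure {g : V ≃ₗ[ℝ] V | ∃ α ∈ Δ.R, ⇑g = sRefl α}

/-- The Weyl orbit `W(μ)` of a weight `μ`. -/
def orbit (μ : V) : Set V := {ν | ∃ w ∈ Δ.weylGroup, w μ = ν}

/-- The weight lattice `P = {μ : ⟨α^∨,μ⟩ ∈ ℤ for all α ∈ R}`. -/
def Pset : Set V := {μ | ∀ α ∈ Δ.R, ∃ n : ℤ, ⟪coroot α, μ⟫ = (n : ℝ)}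

/-- Dominance: `⟨α^∨,μ⟩ ≥ 0` for all positive roots `α`. -/
def IsDominant (μ : V) : Prop := ∀ α ∈ Δ.Rplus, 0 ≤ ⟪coroot α, μ⟫

/-- Membership in the set of dominant weights `P_+`. -/
def IsDomWeight (μ : V) : Prop := μ ∈ Δ.Pset ∧ Δ.IsDominant μ

/-- Half the sum of the positive roots. -/
def rho : V := (1/2 : ℝ) • ∑ α ∈ Δ.Rplus, α

/-- Membership in the regular dominant weights `P_{++} = P_+ + ρ`. -/
def IsRegDomWeight (μ : V) : Prop := ∃ ν : V, Δ.IsDomWeight ν ∧ μ = ν + Δ.rho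

/-- The deformed half-sum `ρ_k = (1/2) Σ_{α ∈ R_+} k_α α`. -/
def rhok (k : V → ℝ) : V := (1/2 : ℝ) • ∑ α ∈ Δ.Rplus, k α • α

/-- `W`-invariance of the multiplicity parameters. -/
def WInvPar {X : Type*} (k : V → X) : Prop :=
  ∀ w ∈ Δ.weylGroup, ∀ α ∈ Δ.R, k (w α) = k α

/-- `R_w^∨` (indexed by the positive roots `α` with `w(α) ∈ -R_+`). -/
def RwD (w : V ≃ₗ[ℝ] V) : Finset V := Δ.Rplus.filter (fun α => -(w α) ∈ Δ.Rplus)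

/-- The length of a Weyl group element, `l(w) = |R_w^∨|`. -/
def len (w : V ≃ₗ[ℝ] V) : ℕ := (Δ.RwD w).card

/-- `w` is a/the shortest Weyl group element with `w(μ⁺) = μ`. -/
def shortestTo (μp μ : V) (w : V ≃ₗ[ℝ] V) : Prop :=
  w ∈ Δ.weylGroup ∧ w μp = μ ∧ ∀ u ∈ Δ.weylGroup, u μp = μ → Δ.len w ≤ Δ.len u

/-- The order `ν ≤ μ` : `μ - ν` is a nonnegative integer combination of simple roots. -/
def le' (ν μ : V) : Prop := ∃ c : Fin N → ℕ, μ - ν = ∑ i, (c i : ℝ) • Δ.simple i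

/-- `μp` is the dominant representative of the Weyl orbit of `μ`. -/
def domRep (μ μp : V) : Prop := Δ.IsDominant μp ∧ μp ∈ Δ.orbit μ

/-- The order `ν ≺ μ`. -/
def prec (ν μ : V) : Prop :=
  ν ≠ μ ∧ ∃ νp μp : V, Δ.domRep ν νp ∧ Δ.domRep μ μp ∧
    ((νp ≠ μp ∧ Δ.le' νp μp) ∨ (νp = μp ∧ Δ.le' ν μ))

/-- `v = ρ_k(μ) = w_μ(ρ_k)` where `w_μ` is the shortest Weyl element with
`w_μ(μ⁺) = μ`, `μ⁺` the dominant representative of the orbit of `μ`. -/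
def IsRhokAt (k : V → ℝ) (μ v : V) : Prop :=
  ∃ (μp : V) (w : V ≃ₗ[ℝ] V), Δ.IsDomWeight μp ∧ Δ.shortestTo μp μ w ∧ v = w (Δ.rhok k)

end RootSystemData

/-- The group algebra `ℂ[V]`, containing `ℂ[P]` as the elements supported on `P`. -/
abbrev GA (V : Type*) [AddCommGroup V] := AddMonoidAlgebra ℂ V

/-- The basis element `x^μ` of the group algebra. -/
def Xp {V : Type*} [AddCommGroup V] (μ : V) : GA V := AddMonoidAlgebra.ofCoeff (Finsupp.single μ 1)

/-- The action of a map `V → V` (e.g. a Weyl group element or a reflection) on the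
group algebra, `w(x^μ) = x^{w(μ)}`. -/
def actA (w : V → V) : GA V → GA V := fun f => AddMonoidAlgebra.ofCoeff (Finsupp.mapDomain w f.coeff)

/-- The derivation `∂^λ`, with `∂^λ(x^μ) = ⟨λ,μ⟩ x^μ`. -/
def pd (lam : V) (f : GA V) : GA V :=
  AddMonoidAlgebra.ofCoeff (f.coeff.sum fun μ c => Finsupp.single μ ((⟪lam, μ⟫ : ℝ) * c))

namespace RootSystemData

variable {N : ℕ} (Δ : RootSystemData V N)

/-- Membership in `ℂ[P] ⊆ ℂ[V]`: the support lies in the weight lattice. -/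
def InCP (f : GA V) : Prop := ↑f.coeff.support ⊆ Δ.Pset

/-- `Dl` is the Dunkl–Cherednik operator `D^λ` on `ℂ[P]`:
`D^λ f = ∂^λ f + Σ_{α∈R_+} k_α ⟨λ,α⟩ (x^α-1)⁻¹(f - s_α f) + ⟨λ,ρ_k⟩ f`, where
`(x^α-1)⁻¹(f - s_α f)` denotes the unique `g` with `(x^α-1)·g = f - s_α f`. -/
def IsDC (k : V → ℝ) (lam : V) (Dl : GA V → GA V) : Prop :=
  ∀ f : GA V, Δ.InCP f →
    ∃ g : V → GA V,
      (∀ α ∈ Δ.Rplus, (Xp α - 1) * g α = f - actA (sRefl α) f) ∧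
      Dl f = pd lam f + ∑ α ∈ Δ.Rplus, ((k α * ⟪lam, α⟫ : ℝ) : ℂ) • g α
        + ((⟪lam, Δ.rhok k⟫ : ℝ) : ℂ) • f

/-- `F` is the nonsymmetric Heckman–Opdam polynomial `F_μ` (relative to the family of
Dunkl–Cherednik operators `D`): it is monic of top term `x^μ`, all lower terms are
`≺ μ`, and it is a joint eigenvector with eigenvalues `⟨λ, μ + ρ_k(μ)⟩`. -/
def IsHO (k : V → ℝ) (D : V → GA V → GA V) (μ : V) (F : GA V) : Prop :=
  Δ.InCP F ∧ F.coeff μ = 1 ∧ (∀ ν ∈ F.coeff.support, ν = μ ∨ Δ.prec ν μ) ∧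
    ∃ v : V, Δ.IsRhokAt k μ v ∧
      ∀ lam : V, D lam F = ((⟪lam, μ + v⟫ : ℝ) : ℂ) • F

/-- The intertwiner `K_i = s_i ∘ D^{α_i^∨} - k_i` (relative to `D`). -/
def Kop (k : V → ℝ) (D : V → GA V → GA V) (i : Fin N) : GA V → GA V :=
  fun f => actA (sRefl (Δ.simple i)) (D (coroot (Δ.simple i)) f)
    - ((k (Δ.simple i) : ℝ) : ℂ) • f

/-- Evaluation of an element of `ℂ[P]` at the point `t` of the torus:
`x^μ(t) = exp(√-1 ⟨t,μ⟩)`. -/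
def evalA (f : GA V) (t : V) : ℂ :=
  f.coeff.sum fun μ c => c * Complex.exp (Complex.I * ((⟪t, μ⟫ : ℝ) : ℂ))

/-- The weight function `Δ_k(t) = ∏_{α∈R} |1 - x^α(t)|^{k_α}`. -/
def weightFn (k : V → ℝ) (t : V) : ℝ :=
  ∏ α ∈ Δ.R, ‖1 - Complex.exp (Complex.I * ((⟪t, α⟫ : ℝ) : ℂ))‖ ^ (k α)

/-- Coordinates on the torus `T = V/2πQ^∨` via the basis of simple coroots. -/
def coordMap (t : Fin N → ℝ) : V := ∑ i, t i • coroot (Δ.simple i)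

/-- The inner product `⟨f,g⟩_k = ∫_T f conj(g) Δ_k dμ` against the normalized Haar
measure of the torus `T = V/2πQ^∨`, computed in the coordinates given by the simple
coroots (each of period `2π`). -/
def ipk (k : V → ℝ) (f g : GA V) : ℂ :=
  (∫ t in Set.pi Set.univ (fun _ : Fin N => Set.Ico (0:ℝ) (2*Real.pi)),
    evalA f (Δ.coordMap t) * (starRingEnd ℂ) (evalA g (Δ.coordMap t)) *
      ((Δ.weightFn k (Δ.coordMap t) : ℝ) : ℂ))
  / (((2*Real.pi) ^ N : ℝ) : ℂ)

end RootSystemData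

end HO

namespace HO

/-! ### Auxiliary development for Statement 17 -/

namespace Aux

open AddMonoidAlgebra

set_option linter.unusedSectionVars false

variable {V : Type*} [NormedAddCommGroup V] [InnerProductSpace ℝ V] [FiniteDimensional ℝ V]

lemma inner_self_ne_zero' {α : V} (hα : α ≠ 0) : ⟪α, α⟫ ≠ 0 :=
  fun h => hα (inner_self_eq_zero.mp h)

lemma inner_self_pos' {α : V} (hα : α ≠ 0) : 0 < ⟪α, α⟫ := by
  rw [real_inner_self_eq_norm_sq]
  exact pow_pos (norm_pos_iff.mpr hα) 2

lemma inner_coroot_self {α : V} (hα : α ≠ 0) : ⟪coroot α, α⟫ = 2 := by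
  unfold coroot
  rw [real_inner_smul_left, div_mul_cancel₀ _ (inner_self_ne_zero' hα)]

lemma coroot_zero : coroot (0 : V) = 0 := by simp [coroot]

lemma coroot_eq_zero_iff {α : V} : coroot α = 0 ↔ α = 0 := by
  constructor
  · intro h
    by_contra hα
    have h2 := inner_coroot_self hα
    rw [h] at h2
    simp at h2
  · intro h; simp [h, coroot_zero]

lemma inner_coroot_left (α v : V) : ⟪coroot α, v⟫ = (2 / ⟪α, α⟫) * ⟪α, v⟫ := by
  simp [coroot, real_inner_smul_left]

lemma coroot_neg (α : V) : coroot (-α) = -coroot α := by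
  simp [coroot, inner_neg_neg]

lemma sRefl_apply (α v : V) : sRefl α v = v - ⟪coroot α, v⟫ • α := rfl

lemma sRefl_neg (α : V) : sRefl (-α) = sRefl α := by
  funext v
  simp [sRefl, coroot_neg, inner_neg_left]

lemma sRefl_add (α v w : V) : sRefl α (v + w) = sRefl α v + sRefl α w := by
  simp only [sRefl, inner_add_right]
  rw [add_smul]
  abel

lemma sRefl_smul (α : V) (c : ℝ) (v : V) : sRefl α (c • v) = c • sRefl α v := by
  simp [sRefl, real_inner_smul_right, smul_sub, mul_smul]

lemma sRefl_self {α : V} (hα : α ≠ 0) : sRefl α α = -α := by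
  rw [sRefl_apply, inner_coroot_self hα]; module

lemma sRefl_inner_coroot (α v : V) : ⟪coroot α, sRefl α v⟫ = -⟪coroot α, v⟫ := by
  by_cases hα : α = 0
  · simp [hα, coroot_zero]
  · rw [sRefl_apply, inner_sub_right, real_inner_smul_right, inner_coroot_self hα]
    ring

lemma sRefl_involutive (α : V) : Function.Involutive (sRefl α) := by
  intro v
  rw [sRefl_apply (v := sRefl α v), sRefl_inner_coroot, sRefl_apply]
  module

lemma sRefl_inner (α v w : V) : ⟪sRefl α v, sRefl α w⟫ = ⟪v, w⟫ := by
  by_cases hα : α = 0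
  · simp [hα, sRefl, coroot_zero]
  · have hne : ⟪α, α⟫ ≠ 0 := inner_self_ne_zero' hα
    simp only [sRefl_apply, inner_sub_left, inner_sub_right, real_inner_smul_left,
      real_inner_smul_right, inner_coroot_left]
    rw [real_inner_comm v α]
    field_simp
    ring

lemma sRefl_symm (α v w : V) : ⟪sRefl α v, w⟫ = ⟪v, sRefl α w⟫ := by
  conv_lhs => rw [← sRefl_involutive α w]
  rw [sRefl_inner]

lemma sRefl_fixed {α v : V} (h : ⟪α, v⟫ = 0) : sRefl α v = v := by
  rw [sRefl_apply, inner_coroot_left, h]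
  simp

/-- The reflection as a linear map. -/
noncomputable def reflLM (α : V) : V →ₗ[ℝ] V where
  toFun := sRefl α
  map_add' := sRefl_add α
  map_smul' := sRefl_smul α

/-- The reflection as a linear equivalence. -/
noncomputable def reflE (α : V) : V ≃ₗ[ℝ] V :=
  LinearEquiv.ofInvolutive (reflLM α) (sRefl_involutive α)

@[simp] lemma reflE_coe (α : V) : ⇑(reflE α) = sRefl α := rfl

lemma reflE_neg (α : V) : reflE (-α) = reflE α := by
  apply LinearEquiv.toLinearMap_injective
  apply LinearMap.ext
  intro v
  simp [sRefl_neg]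

lemma reflE_sq (α : V) : reflE α * reflE α = 1 := by
  apply LinearEquiv.toLinearMap_injective
  apply LinearMap.ext
  intro v
  simpa using sRefl_involutive α v

lemma reflE_inv (α : V) : (reflE α)⁻¹ = reflE α :=
  inv_eq_of_mul_eq_one_right (reflE_sq α)

/-- coroot equivariance for isometries. -/
lemma iso_coroot (f : V ≃ₗ[ℝ] V) (hf : ∀ v w : V, ⟪f v, f w⟫ = ⟪v, w⟫) (α : V) :
    f (coroot α) = coroot (f α) := by
  simp only [coroot, LinearEquiv.map_smul, hf]

lemma iso_sRefl (f : V ≃ₗ[ℝ] V) (hf : ∀ v w : V, ⟪f v, f w⟫ = ⟪v, w⟫) (α v : V) :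
    f (sRefl α v) = sRefl (f α) (f v) := by
  simp only [sRefl_apply, map_sub, LinearEquiv.map_smul]
  rw [← iso_coroot f hf, hf]

lemma iso_reflE_conj (f : V ≃ₗ[ℝ] V) (hf : ∀ v w : V, ⟪f v, f w⟫ = ⟪v, w⟫) (α : V) :
    reflE (f α) = f * reflE α * f⁻¹ := by
  apply LinearEquiv.toLinearMap_injective
  apply LinearMap.ext
  intro v
  show sRefl (f α) v = f (sRefl α (f⁻¹ v))
  rw [iso_sRefl f hf]
  congr 1
  exact (LinearEquiv.apply_symm_apply f v).symm

section RSD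

variable {N : ℕ} (Δ : RootSystemData V N)

lemma weyl_props : ∀ g ∈ Δ.weylGroup, (∀ v w : V, ⟪g v, g w⟫ = ⟪v, w⟫) ∧
    (∀ α ∈ Δ.R, g α ∈ Δ.R) := by
  intro g hg
  induction hg using Subgroup.closure_induction with
  | mem x hx =>
      obtain ⟨α, hα, hcoe⟩ := hx
      have hx' : ∀ v, x v = sRefl α v := fun v => congrFun hcoe v
      constructor
      · intro v w; rw [hx', hx', sRefl_inner]
      · intro β hβ; rw [hx']; exact Δ.reflect_mem α hα β hβ
  | one => exact ⟨fun v w => rfl, fun α hα => hα⟩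
  | mul x y hx hy ihx ihy =>
      constructor
      · intro v w
        show ⟪x (y v), x (y w)⟫ = ⟪v, w⟫
        rw [ihx.1, ihy.1]
      · intro α hα
        exact ihx.2 _ (ihy.2 α hα)
  | inv x hx ih =>
      constructor
      · intro v w
        have : ⟪x (x⁻¹ v), x (x⁻¹ w)⟫ = ⟪x⁻¹ v, x⁻¹ w⟫ := ih.1 _ _
        rw [show x (x⁻¹ v) = v from x.apply_symm_apply v,
          show x (x⁻¹ w) = w from x.apply_symm_apply w] at this
        exact this.symm
      · intro α hα
        have himg : Finset.image (⇑x) Δ.R = Δ.R := by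
          apply Finset.eq_of_subset_of_card_le
          · intro β hβ
            obtain ⟨γ, hγ, rfl⟩ := Finset.mem_image.mp hβ
            exact ih.2 γ hγ
          · rw [Finset.card_image_of_injective _ x.injective]
        rw [← himg] at hα
        obtain ⟨β, hβ, hxβ⟩ := Finset.mem_image.mp hα
        have : x⁻¹ α = β := by rw [← hxβ]; exact x.symm_apply_apply β
        rw [show (x⁻¹ : V ≃ₗ[ℝ] V) α = β from this]
        exact hβ

lemma weyl_inner {g : V ≃ₗ[ℝ] V} (hg : g ∈ Δ.weylGroup) (v w : V) :
    ⟪g v, g w⟫ = ⟪v, w⟫ := (weyl_props Δ g hg).1 v w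

lemma weyl_root {g : V ≃ₗ[ℝ] V} (hg : g ∈ Δ.weylGroup) {α : V} (hα : α ∈ Δ.R) :
    g α ∈ Δ.R := (weyl_props Δ g hg).2 α hα

lemma weyl_coroot {g : V ≃ₗ[ℝ] V} (hg : g ∈ Δ.weylGroup) (α : V) :
    g (coroot α) = coroot (g α) := iso_coroot g (weyl_inner Δ hg) α

lemma weyl_pair {g : V ≃ₗ[ℝ] V} (hg : g ∈ Δ.weylGroup) (α β : V) :
    ⟪coroot (g α), g β⟫ = ⟪coroot α, β⟫ := by
  rw [← weyl_coroot Δ hg, weyl_inner Δ hg]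

lemma simple_mem_R (i : Fin N) : Δ.simple i ∈ Δ.R := Δ.Rplus_subset (Δ.simple_mem i)

lemma simple_ne_zero (i : Fin N) : Δ.simple i ≠ 0 := Δ.nonzero _ (simple_mem_R Δ i)

lemma reflE_mem {α : V} (hα : α ∈ Δ.R) : reflE α ∈ Δ.weylGroup :=
  Subgroup.subset_closure ⟨α, hα, rfl⟩

/-- The basis of simple roots. -/
noncomputable def bo : Module.Basis (Fin N) ℝ V := Module.Basis.mk Δ.simple_li Δ.simple_span.ge

@[simp] lemma bo_apply (i : Fin N) : bo Δ i = Δ.simple i := Module.Basis.mk_apply _ _ i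

/-- Coordinates w.r.t. the simple roots. -/
noncomputable def rep (α : V) (j : Fin N) : ℝ := (bo Δ).repr α j

lemma rep_combo (c : Fin N → ℝ) (j : Fin N) :
    rep Δ (∑ i, c i • Δ.simple i) j = c j := by
  unfold rep
  have h : (∑ i, c i • Δ.simple i) = ∑ i, c i • (bo Δ) i := by simp
  rw [h, map_sum, Finsupp.finset_sum_apply]
  have h2 : ∀ i : Fin N, ((bo Δ).repr (c i • bo Δ i)) j = c i * (if i = j then 1 else 0) := by
    intro i
    rw [LinearEquiv.map_smul, Finsupp.smul_apply, Module.Basis.repr_self, smul_eq_mul]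
    congr 1
    exact Finsupp.single_apply
  rw [Finset.sum_congr rfl (fun i _ => h2 i)]
  simp [mul_ite, Finset.sum_ite_eq']

lemma rep_sum (α : V) : ∑ j, rep Δ α j • Δ.simple j = α := by
  have := (bo Δ).sum_repr α
  simpa [rep] using this

lemma rep_add (α β : V) (j : Fin N) : rep Δ (α + β) j = rep Δ α j + rep Δ β j := by
  unfold rep; rw [map_add]; rfl

lemma rep_neg (α : V) (j : Fin N) : rep Δ (-α) j = -rep Δ α j := by
  unfold rep; rw [map_neg]; rfl

lemma rep_smul (c : ℝ) (α : V) (j : Fin N) : rep Δ (c • α) j = c * rep Δ α j := by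
  unfold rep; rw [LinearEquiv.map_smul]; rfl

lemma rep_sub_smul (α β : V) (c : ℝ) (j : Fin N) :
    rep Δ (α - c • β) j = rep Δ α j - c * rep Δ β j := by
  unfold rep; rw [map_sub, LinearEquiv.map_smul]; rfl

lemma rep_eq_zero {α : V} (h : ∀ j, rep Δ α j = 0) : α = 0 := by
  have := rep_sum Δ α
  rw [← this]
  apply Finset.sum_eq_zero
  intro j _
  rw [h j, zero_smul]

lemma rep_simple (i j : Fin N) : rep Δ (Δ.simple i) j = if i = j then 1 else 0 := by
  unfold rep
  conv_lhs => rw [← bo_apply Δ i]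
  rw [Module.Basis.repr_self]
  exact Finsupp.single_apply

lemma coords_nonneg {α : V} (hα : α ∈ Δ.Rplus) (j : Fin N) : 0 ≤ rep Δ α j := by
  obtain ⟨c, hc⟩ := Δ.pos_combo α hα
  rw [hc, rep_combo]
  positivity

lemma neg_mem_R {α : V} (hα : α ∈ Δ.R) : -α ∈ Δ.R := by
  have := Δ.reflect_mem α hα α hα
  rwa [sRefl_self (Δ.nonzero α hα)] at this

lemma not_both {α : V} (hα : α ∈ Δ.Rplus) : -α ∉ Δ.Rplus := by
  rcases Δ.decomp α (Δ.Rplus_subset hα) with ⟨_, h⟩ | ⟨h, _⟩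
  · exact h
  · exact absurd hα h

lemma pos_of_R {α : V} (hα : α ∈ Δ.R) : α ∈ Δ.Rplus ∨ -α ∈ Δ.Rplus := by
  rcases Δ.decomp α hα with ⟨h, _⟩ | ⟨_, h⟩ <;> tauto

lemma mem_Rplus_of_coord_pos {α : V} (hα : α ∈ Δ.R) {j : Fin N}
    (h : 0 < rep Δ α j) : α ∈ Δ.Rplus := by
  rcases pos_of_R Δ hα with h1 | h1
  · exact h1
  · exfalso
    have h2 := coords_nonneg Δ h1 j
    rw [rep_neg] at h2
    linarith

lemma exists_coord_pos {α : V} (hα : α ∈ Δ.Rplus) : ∃ j, 0 < rep Δ α j := by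
  by_contra h
  push_neg at h
  have : α = 0 := rep_eq_zero Δ (fun j => le_antisymm (h j) (coords_nonneg Δ hα j))
  exact Δ.nonzero α (Δ.Rplus_subset hα) this

/-- T2: a simple reflection permutes the positive roots other than the simple root itself. -/
lemma sRefl_simple_pos (i : Fin N) {β : V} (hβ : β ∈ Δ.Rplus) (hne : β ≠ Δ.simple i) :
    sRefl (Δ.simple i) β ∈ Δ.Rplus ∧ sRefl (Δ.simple i) β ≠ Δ.simple i := by
  have hβR : β ∈ Δ.R := Δ.Rplus_subset hβ
  have hsR : sRefl (Δ.simple i) β ∈ Δ.R := Δ.reflect_mem _ (simple_mem_R Δ i) _ hβR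
  have hmem : sRefl (Δ.simple i) β ∈ Δ.Rplus := by
    by_cases hall : ∀ j, j ≠ i → rep Δ β j = 0
    · exfalso
      have hβeq : β = rep Δ β i • Δ.simple i := by
        conv_lhs => rw [← rep_sum Δ β]
        rw [Finset.sum_eq_single i]
        · intro j _ hj; rw [hall j hj, zero_smul]
        · intro h; exact absurd (Finset.mem_univ i) h
      have := Δ.reduced (Δ.simple i) (simple_mem_R Δ i) (rep Δ β i) (by rw [← hβeq]; exact hβR)
      rcases this with h1 | h1
      · rw [h1, one_smul] at hβeq; exact hne hβeq
      · rw [h1] at hβeq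
        have : -β = Δ.simple i := by rw [hβeq]; module
        exact not_both Δ hβ (this ▸ Δ.simple_mem i)
    · push_neg at hall
      obtain ⟨j, hji, hj0⟩ := hall
      have hjpos : 0 < rep Δ β j := lt_of_le_of_ne (coords_nonneg Δ hβ j) (Ne.symm hj0)
      apply mem_Rplus_of_coord_pos Δ hsR (j := j)
      rw [sRefl_apply, rep_sub_smul, rep_simple]
      rw [if_neg (fun h => hji h.symm)]
      simpa using hjpos
  refine ⟨hmem, fun h => ?_⟩
  have h2 := congrArg (sRefl (Δ.simple i)) h
  rw [sRefl_involutive (Δ.simple i) β, sRefl_self (simple_ne_zero Δ i)] at h2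
  exact not_both Δ (Δ.simple_mem i) (h2 ▸ hβ)

lemma prod_erase_reindex {M : Type*} [CommMonoid M] (i : Fin N) (f : V → M) :
    ∏ α ∈ Δ.Rplus.erase (Δ.simple i), f (sRefl (Δ.simple i) α)
      = ∏ α ∈ Δ.Rplus.erase (Δ.simple i), f α := by
  apply Finset.prod_nbij' (fun α => sRefl (Δ.simple i) α) (fun α => sRefl (Δ.simple i) α)
  · intro a ha
    obtain ⟨hne, hmem⟩ := Finset.mem_erase.mp ha
    have := sRefl_simple_pos Δ i hmem hne
    exact Finset.mem_erase.mpr ⟨this.2, this.1⟩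
  · intro a ha
    obtain ⟨hne, hmem⟩ := Finset.mem_erase.mp ha
    have := sRefl_simple_pos Δ i hmem hne
    exact Finset.mem_erase.mpr ⟨this.2, this.1⟩
  · intro a _; exact sRefl_involutive _ a
  · intro a _; exact sRefl_involutive _ a
  · intro a _; rfl

lemma sum_erase_reindex {M : Type*} [AddCommMonoid M] (i : Fin N) (f : V → M) :
    ∑ α ∈ Δ.Rplus.erase (Δ.simple i), f (sRefl (Δ.simple i) α)
      = ∑ α ∈ Δ.Rplus.erase (Δ.simple i), f α := by
  apply Finset.sum_nbij' (fun α => sRefl (Δ.simple i) α) (fun α => sRefl (Δ.simple i) α)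
  · intro a ha
    obtain ⟨hne, hmem⟩ := Finset.mem_erase.mp ha
    have := sRefl_simple_pos Δ i hmem hne
    exact Finset.mem_erase.mpr ⟨this.2, this.1⟩
  · intro a ha
    obtain ⟨hne, hmem⟩ := Finset.mem_erase.mp ha
    have := sRefl_simple_pos Δ i hmem hne
    exact Finset.mem_erase.mpr ⟨this.2, this.1⟩
  · intro a _; exact sRefl_involutive _ a
  · intro a _; exact sRefl_involutive _ a
  · intro a _; rfl

/-- A weighted sum of positive roots, weighted by a `sᵢ`-invariant weight,
transforms simply under `sᵢ`. -/
lemma sRefl_weighted_sum (i : Fin N) (m : V → ℝ) (hm : ∀ β ∈ Δ.R, m (sRefl (Δ.simple i) β) = m β)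
    (φ : V → V) (hφadd : ∀ β, sRefl (Δ.simple i) (φ β) = φ (sRefl (Δ.simple i) β))
    (hφneg : φ (-(Δ.simple i)) = -φ (Δ.simple i)) :
    sRefl (Δ.simple i) (∑ α ∈ Δ.Rplus, m α • φ α)
      = (∑ α ∈ Δ.Rplus, m α • φ α) - (2 * m (Δ.simple i)) • φ (Δ.simple i) := by
  have hmap : sRefl (Δ.simple i) (∑ α ∈ Δ.Rplus, m α • φ α)
      = ∑ α ∈ Δ.Rplus, m α • sRefl (Δ.simple i) (φ α) := by
    show (reflLM (Δ.simple i)) (∑ α ∈ Δ.Rplus, m α • φ α) = _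
    rw [map_sum]
    refine Finset.sum_congr rfl fun α _ => ?_
    exact (reflLM (Δ.simple i)).map_smul (m α) (φ α)
  rw [hmap]
  have hsplit : ∑ α ∈ Δ.Rplus, m α • sRefl (Δ.simple i) (φ α)
      = (∑ α ∈ Δ.Rplus.erase (Δ.simple i), m α • sRefl (Δ.simple i) (φ α))
        + m (Δ.simple i) • sRefl (Δ.simple i) (φ (Δ.simple i)) :=
    (Finset.sum_erase_add _ _ (Δ.simple_mem i)).symm
  have hmain : ∑ α ∈ Δ.Rplus.erase (Δ.simple i), m α • sRefl (Δ.simple i) (φ α)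
      = ∑ α ∈ Δ.Rplus.erase (Δ.simple i), m α • φ α := by
    have hre := sum_erase_reindex Δ i (fun β => m β • φ β)
    rw [← hre]
    refine Finset.sum_congr rfl fun α hα => ?_
    obtain ⟨hne, hmem⟩ := Finset.mem_erase.mp hα
    rw [hφadd α, hm α (Δ.Rplus_subset hmem)]
  rw [hsplit, hmain, hφadd, sRefl_self (simple_ne_zero Δ i), hφneg]
  have := Finset.sum_erase_add Δ.Rplus (fun α => m α • φ α) (Δ.simple_mem i)
  rw [← this]
  rw [two_mul, add_smul, smul_neg]
  abel

/-- `ρ^∨`, the half sum of the positive coroots. -/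
noncomputable def rhoH : V := (2⁻¹ : ℝ) • ∑ α ∈ Δ.Rplus, coroot α

lemma sRefl_coroot (α β : V) : sRefl α (coroot β) = coroot (sRefl α β) :=
  iso_coroot (reflE α) (fun v w => sRefl_inner α v w) β

lemma sRefl_rhoH (i : Fin N) :
    sRefl (Δ.simple i) (rhoH Δ) = rhoH Δ - coroot (Δ.simple i) := by
  unfold rhoH
  rw [sRefl_smul]
  have h := sRefl_weighted_sum Δ i (fun _ => 1) (fun β _ => rfl) coroot
    (fun β => sRefl_coroot _ β) (coroot_neg _)
  simp only [one_smul] at h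
  rw [h, smul_sub, smul_smul]
  norm_num

lemma inner_simple_rhoH (i : Fin N) : ⟪Δ.simple i, rhoH Δ⟫ = 1 := by
  have hc : ⟪Δ.simple i, Δ.simple i⟫ ≠ 0 := inner_self_ne_zero' (simple_ne_zero Δ i)
  have h1 := sRefl_rhoH Δ i
  rw [sRefl_apply] at h1
  have h2 : ⟪coroot (Δ.simple i), rhoH Δ⟫ • Δ.simple i = coroot (Δ.simple i) :=
    sub_right_injective h1
  have h3 := congrArg (fun x : V => ⟪x, Δ.simple i⟫) h2
  simp only [real_inner_smul_left] at h3
  rw [inner_coroot_self (simple_ne_zero Δ i), inner_coroot_left] at h3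
  rw [real_inner_comm] at h3
  field_simp at h3
  linarith

lemma inner_coroot_rhoH (i : Fin N) :
    ⟪coroot (Δ.simple i), rhoH Δ⟫ = 2 / ⟪Δ.simple i, Δ.simple i⟫ := by
  rw [inner_coroot_left, inner_simple_rhoH, mul_one]

lemma k_sRefl {k : V → ℝ} (hk : Δ.WInvPar k) (i : Fin N) {β : V} (hβ : β ∈ Δ.R) :
    k (sRefl (Δ.simple i) β) = k β :=
  hk (reflE (Δ.simple i)) (reflE_mem Δ (simple_mem_R Δ i)) β hβ

lemma sRefl_rhok {k : V → ℝ} (hk : Δ.WInvPar k) (i : Fin N) :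
    sRefl (Δ.simple i) (Δ.rhok k) = Δ.rhok k - k (Δ.simple i) • Δ.simple i := by
  unfold RootSystemData.rhok
  rw [sRefl_smul]
  have h := sRefl_weighted_sum Δ i k (fun β hβ => k_sRefl Δ hk i hβ) id
    (fun β => rfl) rfl
  simp only [id] at h
  rw [h, smul_sub, smul_smul]
  have h2 : (1/2 : ℝ) * (2 * k (Δ.simple i)) = k (Δ.simple i) := by ring
  rw [h2]

lemma inner_coroot_rhok {k : V → ℝ} (hk : Δ.WInvPar k) (i : Fin N) :
    ⟪coroot (Δ.simple i), Δ.rhok k⟫ = k (Δ.simple i) := by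
  have h1 := sRefl_rhok Δ hk i
  rw [sRefl_apply] at h1
  have h2 : ⟪coroot (Δ.simple i), Δ.rhok k⟫ • Δ.simple i
      = k (Δ.simple i) • Δ.simple i := sub_right_injective h1
  exact smul_left_injective ℝ (simple_ne_zero Δ i) h2

/-! ### Inversion sets -/

lemma mem_RwD_iff (w : V ≃ₗ[ℝ] V) (α : V) :
    α ∈ Δ.RwD w ↔ α ∈ Δ.Rplus ∧ -(w α) ∈ Δ.Rplus := Finset.mem_filter

lemma RwD_subset (w : V ≃ₗ[ℝ] V) : Δ.RwD w ⊆ Δ.Rplus := Finset.filter_subset _ _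

lemma not_mem_RwD_iff {w : V ≃ₗ[ℝ] V} (hw : w ∈ Δ.weylGroup) {α : V} (hα : α ∈ Δ.Rplus) :
    α ∉ Δ.RwD w ↔ w α ∈ Δ.Rplus := by
  rw [mem_RwD_iff]
  have hR : w α ∈ Δ.R := weyl_root Δ hw (Δ.Rplus_subset hα)
  constructor
  · intro h
    rcases pos_of_R Δ hR with h1 | h1
    · exact h1
    · exact absurd ⟨hα, h1⟩ h
  · intro h hmem
    exact not_both Δ h hmem.2

lemma mul_reflE_apply (w : V ≃ₗ[ℝ] V) (α v : V) :
    (w * reflE α) v = w (sRefl α v) := rfl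

lemma mem_RwD_mul_reflE {w : V ≃ₗ[ℝ] V} (hw : w ∈ Δ.weylGroup) (i : Fin N) {β : V}
    (hβ : β ∈ Δ.Rplus) (hne : β ≠ Δ.simple i) :
    β ∈ Δ.RwD (w * reflE (Δ.simple i)) ↔ sRefl (Δ.simple i) β ∈ Δ.RwD w := by
  have hs := sRefl_simple_pos Δ i hβ hne
  rw [mem_RwD_iff, mem_RwD_iff, mul_reflE_apply]
  simp [hβ, hs.1]

lemma simple_mem_RwD_mul_reflE {w : V ≃ₗ[ℝ] V} (hw : w ∈ Δ.weylGroup) (i : Fin N) :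
    Δ.simple i ∈ Δ.RwD (w * reflE (Δ.simple i)) ↔ Δ.simple i ∉ Δ.RwD w := by
  rw [mem_RwD_iff, mul_reflE_apply, sRefl_self (simple_ne_zero Δ i), map_neg, neg_neg,
    not_mem_RwD_iff Δ hw (Δ.simple_mem i)]
  simp [Δ.simple_mem i]

lemma card_RwD_mul_reflE {w : V ≃ₗ[ℝ] V} (hw : w ∈ Δ.weylGroup) (i : Fin N) :
    (Δ.RwD (w * reflE (Δ.simple i))).card
      = if Δ.simple i ∈ Δ.RwD w then (Δ.RwD w).card - 1 else (Δ.RwD w).card + 1 := by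
  have hbij : ((Δ.RwD (w * reflE (Δ.simple i))).erase (Δ.simple i)).card
      = ((Δ.RwD w).erase (Δ.simple i)).card := by
    apply Finset.card_nbij' (fun α => sRefl (Δ.simple i) α) (fun α => sRefl (Δ.simple i) α)
    · intro a ha
      obtain ⟨hne, hmem⟩ := Finset.mem_erase.mp ha
      have haP : a ∈ Δ.Rplus := RwD_subset Δ _ hmem
      have hs := sRefl_simple_pos Δ i haP hne
      exact Finset.mem_erase.mpr ⟨hs.2, (mem_RwD_mul_reflE Δ hw i haP hne).mp hmem⟩
    · intro a ha
      obtain ⟨hne, hmem⟩ := Finset.mem_erase.mp ha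
      have haP : a ∈ Δ.Rplus := RwD_subset Δ _ hmem
      have hs := sRefl_simple_pos Δ i haP hne
      refine Finset.mem_erase.mpr ⟨hs.2, ?_⟩
      rw [mem_RwD_mul_reflE Δ hw i hs.1 hs.2, sRefl_involutive]
      exact hmem
    · intro a _; exact sRefl_involutive _ a
    · intro a _; exact sRefl_involutive _ a
  by_cases hmem : Δ.simple i ∈ Δ.RwD w
  · rw [if_pos hmem]
    have h1 : Δ.simple i ∉ Δ.RwD (w * reflE (Δ.simple i)) := by
      rw [simple_mem_RwD_mul_reflE Δ hw i]
      simpa using hmem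
    rw [← Finset.erase_eq_of_notMem h1, hbij, Finset.card_erase_of_mem hmem]
  · rw [if_neg hmem]
    have h1 : Δ.simple i ∈ Δ.RwD (w * reflE (Δ.simple i)) :=
      (simple_mem_RwD_mul_reflE Δ hw i).mpr hmem
    rw [← Finset.card_erase_add_one h1, hbij, Finset.erase_eq_of_notMem hmem]

/-! ### Words in simple reflections -/

/-- The product of the word of simple reflections given by `l`. -/
noncomputable def wrd (l : List (Fin N)) : V ≃ₗ[ℝ] V :=
  (l.map (fun i => reflE (Δ.simple i))).prod

@[simp] lemma wp_nil : wrd Δ ([] : List (Fin N)) = 1 := rfl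

lemma wp_cons (i : Fin N) (l : List (Fin N)) :
    wrd Δ (i :: l) = reflE (Δ.simple i) * wrd Δ l := by
  simp [wrd]

lemma wp_append (l l' : List (Fin N)) : wrd Δ (l ++ l') = wrd Δ l * wrd Δ l' := by
  simp [wrd]

lemma word_mem (l : List (Fin N)) : wrd Δ l ∈ Δ.weylGroup := by
  apply Subgroup.list_prod_mem
  intro x hx
  obtain ⟨i, _, rfl⟩ := List.mem_map.mp hx
  exact reflE_mem Δ (simple_mem_R Δ i)

lemma reflE_conj_sRefl (α γ : V) : reflE (sRefl α γ) = reflE α * reflE γ * reflE α := by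
  have h := iso_reflE_conj (reflE α) (fun v w => sRefl_inner α v w) γ
  rw [reflE_inv] at h
  exact h

lemma height_refl_word : ∀ (n : ℕ), ∀ α ∈ Δ.Rplus, (∑ j, rep Δ α j) < (n : ℝ) →
    ∃ l : List (Fin N), reflE α = wrd Δ l := by
  intro n
  induction n with
  | zero =>
      intro α hα h
      exfalso
      have : (0:ℝ) ≤ ∑ j, rep Δ α j := Finset.sum_nonneg (fun j _ => coords_nonneg Δ hα j)
      simp at h
      linarith
  | succ n ih =>
      intro α hα hlt
      by_cases hsimp : ∃ i, α = Δ.simple i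
      · obtain ⟨i, rfl⟩ := hsimp
        exact ⟨[i], by simp [wrd]⟩
      · push_neg at hsimp
        have hpos : 0 < ⟪α, α⟫ := inner_self_pos' (Δ.nonzero α (Δ.Rplus_subset hα))
        have hsum : ⟪α, α⟫ = ∑ j, rep Δ α j * ⟪Δ.simple j, α⟫ := by
          nth_rewrite 1 [← rep_sum Δ α]
          rw [sum_inner]
          simp [real_inner_smul_left]
        have hex : ∃ j, 0 < rep Δ α j * ⟪Δ.simple j, α⟫ := by
          by_contra hcon
          push_neg at hcon
          have : ⟪α, α⟫ ≤ 0 := hsum ▸ Finset.sum_nonpos (fun j _ => hcon j)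
          linarith
        obtain ⟨i, hi⟩ := hex
        have hinner : 0 < ⟪Δ.simple i, α⟫ := by
          rcases mul_pos_iff.mp hi with ⟨h1, h2⟩ | ⟨h1, h2⟩
          · exact h2
          · exact absurd (coords_nonneg Δ hα i) (not_le.mpr h1)
        have hc' : 0 < ⟪coroot (Δ.simple i), α⟫ := by
          rw [inner_coroot_left]
          exact mul_pos (div_pos two_pos
            (inner_self_pos' (simple_ne_zero Δ i))) hinner
        obtain ⟨mz, hmz⟩ := Δ.crystal (Δ.simple i) (simple_mem_R Δ i) α (Δ.Rplus_subset hα)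
        have hm1 : (1 : ℝ) ≤ ⟪coroot (Δ.simple i), α⟫ := by
          rw [hmz] at hc' ⊢
          exact_mod_cast hc'
        have hγP := sRefl_simple_pos Δ i hα (hsimp i)
        have hht : (∑ j, rep Δ (sRefl (Δ.simple i) α) j)
            = (∑ j, rep Δ α j) - ⟪coroot (Δ.simple i), α⟫ := by
          have hrep : ∀ j, rep Δ (sRefl (Δ.simple i) α) j
              = rep Δ α j - ⟪coroot (Δ.simple i), α⟫ * rep Δ (Δ.simple i) j := by
            intro j
            rw [sRefl_apply, rep_sub_smul]
          rw [Finset.sum_congr rfl (fun j _ => hrep j), Finset.sum_sub_distrib]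
          congr 1
          rw [← Finset.mul_sum]
          have : (∑ j, rep Δ (Δ.simple i) j) = 1 := by
            simp [rep_simple, Finset.sum_ite_eq]
          rw [this, mul_one]
        have hlt' : (∑ j, rep Δ (sRefl (Δ.simple i) α) j) < (n : ℝ) := by
          push_cast at hlt ⊢
          rw [hht]
          linarith
        obtain ⟨l, hl⟩ := ih (sRefl (Δ.simple i) α) hγP.1 hlt'
        refine ⟨[i] ++ l ++ [i], ?_⟩
        have hαγ : reflE α = reflE (sRefl (Δ.simple i) (sRefl (Δ.simple i) α)) := by
          rw [sRefl_involutive]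
        rw [hαγ, reflE_conj_sRefl, hl, wp_append, wp_append]
        simp [wp_cons, wrd]

lemma exists_word : ∀ g ∈ Δ.weylGroup, ∃ l : List (Fin N), g = wrd Δ l := by
  intro g hg
  induction hg using Subgroup.closure_induction with
  | mem x hx =>
      obtain ⟨α, hα, hcoe⟩ := hx
      have hx' : x = reflE α := by
        apply LinearEquiv.toLinearMap_injective
        apply LinearMap.ext
        intro v
        exact congrFun hcoe v
      rcases pos_of_R Δ hα with h1 | h1
      · obtain ⟨n, hn⟩ := exists_nat_gt (∑ j, rep Δ α j)
        obtain ⟨l, hl⟩ := height_refl_word Δ n α h1 hn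
        exact ⟨l, by rw [hx', hl]⟩
      · obtain ⟨n, hn⟩ := exists_nat_gt (∑ j, rep Δ (-α) j)
        obtain ⟨l, hl⟩ := height_refl_word Δ n (-α) h1 hn
        refine ⟨l, by rw [hx', ← reflE_neg, hl]⟩
  | one => exact ⟨[], rfl⟩
  | mul x y _ _ ihx ihy =>
      obtain ⟨lx, hx⟩ := ihx
      obtain ⟨ly, hy⟩ := ihy
      exact ⟨lx ++ ly, by rw [wp_append, hx, hy]⟩
  | inv x _ ih =>
      obtain ⟨l, hl⟩ := ih
      have hrev : ∀ l' : List (Fin N), (wrd Δ l')⁻¹ = wrd Δ l'.reverse := by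
        intro l'
        induction l' with
        | nil => simp
        | cons i t iht =>
            rw [wp_cons, mul_inv_rev, iht, List.reverse_cons, wp_append]
            have h2 : wrd Δ (i :: ([] : List (Fin N))) = reflE (Δ.simple i) := by simp [wrd]
            rw [h2, reflE_inv]
      exact ⟨l.reverse, by rw [hl, hrev]⟩

lemma deletion : ∀ (l : List (Fin N)) (j : Fin N),
    -((wrd Δ l) (Δ.simple j)) ∈ Δ.Rplus →
    ∃ l' : List (Fin N), l'.length + 1 = l.length ∧
      wrd Δ l' = wrd Δ l * reflE (Δ.simple j) := by
  intro l
  induction l with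
  | nil =>
      intro j h
      exfalso
      exact not_both Δ (Δ.simple_mem j) (by simpa [wrd] using h)
  | cons i l ih =>
      intro j h
      by_cases hc : -((wrd Δ l) (Δ.simple j)) ∈ Δ.Rplus
      · obtain ⟨l', hlen, hl'⟩ := ih j hc
        refine ⟨i :: l', by simp [← hlen], ?_⟩
        rw [wp_cons, wp_cons, hl', mul_assoc]
      · have hβR : (wrd Δ l) (Δ.simple j) ∈ Δ.R :=
          weyl_root Δ (word_mem Δ l) (simple_mem_R Δ j)
        have hβP : (wrd Δ l) (Δ.simple j) ∈ Δ.Rplus := (pos_of_R Δ hβR).resolve_right hc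
        have hββ : (wrd Δ l) (Δ.simple j) = Δ.simple i := by
          by_contra hne
          have hs := sRefl_simple_pos Δ i hβP hne
          have h' : -(sRefl (Δ.simple i) ((wrd Δ l) (Δ.simple j))) ∈ Δ.Rplus := by
            rw [wp_cons] at h
            exact h
          exact not_both Δ hs.1 h'
        refine ⟨l, by simp, ?_⟩
        have hiso := iso_reflE_conj (wrd Δ l) (weyl_inner Δ (word_mem Δ l)) (Δ.simple j)
        rw [hββ] at hiso
        calc wrd Δ l = wrd Δ l * (reflE (Δ.simple j) * reflE (Δ.simple j)) := by
              rw [reflE_sq, mul_one]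
          _ = (wrd Δ l * reflE (Δ.simple j) * (wrd Δ l)⁻¹) * wrd Δ l * reflE (Δ.simple j) := by
              group
          _ = reflE (Δ.simple i) * wrd Δ l * reflE (Δ.simple j) := by rw [← hiso]
          _ = wrd Δ (i :: l) * reflE (Δ.simple j) := by rw [wp_cons]

/-- T6: an element of the Weyl group with no inversions is the identity. -/
lemma eq_one_of_RwD_empty {w : V ≃ₗ[ℝ] V} (hw : w ∈ Δ.weylGroup) (h : Δ.RwD w = ∅) :
    w = 1 := by
  obtain ⟨l0, hl0⟩ := exists_word Δ w hw
  have hex : ∃ n : ℕ, ∃ l : List (Fin N), l.length = n ∧ w = wrd Δ l :=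
    ⟨l0.length, l0, rfl, hl0⟩
  obtain ⟨l, hlen, hl⟩ := Nat.find_spec hex
  rcases List.eq_nil_or_concat l with rfl | ⟨L, j, rfl⟩
  · simpa [wrd] using hl
  · exfalso
    have hw1 : w = wrd Δ L * reflE (Δ.simple j) := by
      rw [hl, List.concat_eq_append, wp_append]
      have hj : wrd Δ (j :: ([] : List (Fin N))) = reflE (Δ.simple j) := by simp [wrd]
      rw [hj]
    have hv : wrd Δ L = w * reflE (Δ.simple j) := by
      rw [hw1, mul_assoc, reflE_sq, mul_one]
    have hαj : w (Δ.simple j) ∈ Δ.Rplus := by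
      apply (not_mem_RwD_iff Δ hw (Δ.simple_mem j)).mp
      rw [h]
      simp
    have hneg : -((wrd Δ L) (Δ.simple j)) ∈ Δ.Rplus := by
      rw [hv, mul_reflE_apply, sRefl_self (simple_ne_zero Δ j), map_neg, neg_neg]
      exact hαj
    obtain ⟨l', hlen', hl'⟩ := deletion Δ L j hneg
    have hwl' : w = wrd Δ l' := by
      rw [hl', hv, mul_assoc, reflE_sq, mul_one]
    have hlt : l'.length < Nat.find hex := by
      have h1 : (L.concat j).length = L.length + 1 := by simp
      omega
    exact Nat.find_min hex hlt ⟨l', rfl, hwl'⟩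

/-! ### Stabilizers and minimal coset representatives -/

lemma inner_coroot_zero_iff {γ μ : V} (hγ : γ ≠ 0) : ⟪coroot γ, μ⟫ = 0 ↔ ⟪γ, μ⟫ = 0 := by
  rw [inner_coroot_left]
  constructor
  · intro h
    rcases mul_eq_zero.mp h with h1 | h1
    · exact absurd h1 (div_ne_zero two_ne_zero (inner_self_ne_zero' hγ))
    · exact h1
  · intro h; rw [h, mul_zero]

lemma inner_coroot_nonneg {γ μ : V} (hγ : γ ≠ 0) (h : 0 ≤ ⟪coroot γ, μ⟫) : 0 ≤ ⟪γ, μ⟫ := by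
  rw [inner_coroot_left] at h
  have hpos : 0 < 2 / ⟪γ, γ⟫ := div_pos two_pos (inner_self_pos' hγ)
  nlinarith

lemma stab_root_orth {w : V ≃ₗ[ℝ] V} (hw : w ∈ Δ.weylGroup) {μ : V} (hμd : Δ.IsDominant μ)
    (hfix : w μ = μ) {α : V} (hα : α ∈ Δ.RwD w) :
    ⟪coroot α, μ⟫ = 0 ∧ ⟪coroot (-(w α)), μ⟫ = 0 := by
  obtain ⟨hαP, hnegP⟩ := (mem_RwD_iff Δ w α).mp hα
  have h1 : ⟪coroot α, μ⟫ = ⟪coroot (w α), w μ⟫ := (weyl_pair Δ hw α μ).symm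
  rw [hfix] at h1
  have h2 : coroot (w α) = -coroot (-(w α)) := by rw [coroot_neg, neg_neg]
  have h3 : ⟪coroot α, μ⟫ = -⟪coroot (-(w α)), μ⟫ := by rw [h1, h2, inner_neg_left]
  have ha := hμd α hαP
  have hb := hμd _ hnegP
  constructor <;> linarith

lemma rep_finset_sum {ι : Type*} (s : Finset ι) (f : ι → V) (j : Fin N) :
    rep Δ (∑ i ∈ s, f i) j = ∑ i ∈ s, rep Δ (f i) j := by
  unfold rep
  rw [map_sum, Finsupp.finset_sum_apply]

lemma orth_coords {μ : V} (hμd : Δ.IsDominant μ) {β : V} (hβ : β ∈ Δ.Rplus)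
    (horth : ⟪coroot β, μ⟫ = 0) {j : Fin N} (hj : rep Δ β j ≠ 0) :
    ⟪coroot (Δ.simple j), μ⟫ = 0 := by
  have hβ0 : β ≠ 0 := Δ.nonzero β (Δ.Rplus_subset hβ)
  have h0 : ⟪β, μ⟫ = 0 := (inner_coroot_zero_iff hβ0).mp horth
  have hsum : ∑ j', rep Δ β j' * ⟪Δ.simple j', μ⟫ = 0 := by
    rw [← h0]
    nth_rewrite 2 [← rep_sum Δ β]
    rw [sum_inner]
    simp [real_inner_smul_left]
  have hterm : ∀ j' ∈ Finset.univ, (0:ℝ) ≤ rep Δ β j' * ⟪Δ.simple j', μ⟫ := by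
    intro j' _
    apply mul_nonneg (coords_nonneg Δ hβ j')
    exact inner_coroot_nonneg (simple_ne_zero Δ j') (hμd _ (Δ.simple_mem j'))
  have hz := (Finset.sum_eq_zero_iff_of_nonneg hterm).mp hsum j (Finset.mem_univ j)
  rcases mul_eq_zero.mp hz with h1 | h1
  · exact absurd h1 hj
  · exact (inner_coroot_zero_iff (simple_ne_zero Δ j)).mpr h1

/-- `w` maps the simple roots orthogonal to `μ` to positive roots. -/
def Mp (μ : V) (w : V ≃ₗ[ℝ] V) : Prop :=
  ∀ i, ⟪coroot (Δ.simple i), μ⟫ = 0 → Δ.simple i ∉ Δ.RwD w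

lemma Mp_maps_pos {μ : V} (hμd : Δ.IsDominant μ) {w : V ≃ₗ[ℝ] V} (hw : w ∈ Δ.weylGroup)
    (hM : Mp Δ μ w) {β : V} (hβ : β ∈ Δ.Rplus) (horth : ⟪coroot β, μ⟫ = 0) :
    w β ∈ Δ.Rplus := by
  have hwβ : w β = ∑ j, rep Δ β j • w (Δ.simple j) := by
    conv_lhs => rw [← rep_sum Δ β]
    rw [map_sum]
    exact Finset.sum_congr rfl (fun j _ => LinearEquiv.map_smul w _ _)
  have hpos : ∀ j, rep Δ β j ≠ 0 → w (Δ.simple j) ∈ Δ.Rplus := by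
    intro j hj
    have horj := orth_coords Δ hμd hβ horth hj
    exact (not_mem_RwD_iff Δ hw (Δ.simple_mem j)).mp (hM j horj)
  have hrep : ∀ j', 0 ≤ rep Δ (w β) j' := by
    intro j'
    rw [hwβ, rep_finset_sum]
    apply Finset.sum_nonneg
    intro j _
    by_cases hj : rep Δ β j = 0
    · rw [rep_smul, hj, zero_mul]
    · rw [rep_smul]
      exact mul_nonneg (coords_nonneg Δ hβ j) (coords_nonneg Δ (hpos j hj) j')
  have hwβR : w β ∈ Δ.R := weyl_root Δ hw (Δ.Rplus_subset hβ)
  have hwβ0 : w β ≠ 0 := by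
    intro h
    exact Δ.nonzero β (Δ.Rplus_subset hβ) ((LinearEquiv.map_eq_zero_iff w).mp h)
  have hex : ∃ j', rep Δ (w β) j' ≠ 0 := by
    by_contra hcon
    push_neg at hcon
    exact hwβ0 (rep_eq_zero Δ hcon)
  obtain ⟨j', hj'⟩ := hex
  exact mem_Rplus_of_coord_pos Δ hwβR (lt_of_le_of_ne (hrep j') (Ne.symm hj'))

lemma lemV {μ : V} (hμd : Δ.IsDominant μ) {w u : V ≃ₗ[ℝ] V}
    (hw : w ∈ Δ.weylGroup) (hu : u ∈ Δ.weylGroup) (hM : Mp Δ μ w) (hufix : u μ = μ) :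
    (Δ.RwD w).card + (Δ.RwD u).card ≤ (Δ.RwD (w * u)).card := by
  classical
  set A := Δ.RwD u with hA
  set B := (Δ.RwD w).image (fun γ => (u⁻¹ : V ≃ₗ[ℝ] V) γ) with hB
  have hu' : (u⁻¹ : V ≃ₗ[ℝ] V) ∈ Δ.weylGroup := inv_mem hu
  have hufix' : (u⁻¹ : V ≃ₗ[ℝ] V) μ = μ := by
    conv_lhs => rw [← hufix]
    exact u.symm_apply_apply μ
  have hAsub : A ⊆ Δ.RwD (w * u) := by
    intro α hα
    obtain ⟨hαP, hnegP⟩ := (mem_RwD_iff Δ u α).mp hα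
    have horth := (stab_root_orth Δ hu hμd hufix hα).2
    have hwpos : w (-(u α)) ∈ Δ.Rplus := Mp_maps_pos Δ hμd hw hM hnegP horth
    refine (mem_RwD_iff Δ _ α).mpr ⟨hαP, ?_⟩
    have heq : -((w * u) α) = w (-(u α)) := by
      rw [map_neg]
      rfl
    rw [heq]
    exact hwpos
  have hBsub : B ⊆ Δ.RwD (w * u) := by
    intro γ' hγ'
    obtain ⟨γ, hγ, rfl⟩ := Finset.mem_image.mp hγ'
    obtain ⟨hγP, hnegP⟩ := (mem_RwD_iff Δ w γ).mp hγ
    have hR : (u⁻¹ : V ≃ₗ[ℝ] V) γ ∈ Δ.R := weyl_root Δ hu' (Δ.Rplus_subset hγP)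
    have hP : (u⁻¹ : V ≃ₗ[ℝ] V) γ ∈ Δ.Rplus := by
      by_contra hcon
      have hneg : -((u⁻¹ : V ≃ₗ[ℝ] V) γ) ∈ Δ.Rplus := (pos_of_R Δ hR).resolve_left hcon
      have hmem : γ ∈ Δ.RwD (u⁻¹ : V ≃ₗ[ℝ] V) := (mem_RwD_iff Δ _ γ).mpr ⟨hγP, hneg⟩
      have horth := (stab_root_orth Δ hu' hμd hufix' hmem).1
      have hwγ := Mp_maps_pos Δ hμd hw hM hγP horth
      exact not_both Δ hwγ hnegP
    refine (mem_RwD_iff Δ _ _).mpr ⟨hP, ?_⟩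
    have heq : (w * u) ((u⁻¹ : V ≃ₗ[ℝ] V) γ) = w γ := by
      show w (u ((u⁻¹ : V ≃ₗ[ℝ] V) γ)) = w γ
      congr 1
      exact u.apply_symm_apply γ
    rw [heq]
    exact hnegP
  have hdisj : Disjoint A B := by
    rw [Finset.disjoint_left]
    intro α hαA hαB
    obtain ⟨γ, hγ, hγe⟩ := Finset.mem_image.mp hαB
    obtain ⟨_, hneg⟩ := (mem_RwD_iff Δ u α).mp hαA
    have huα : u α = γ := by
      rw [← hγe]
      exact u.apply_symm_apply γ
    rw [huα] at hneg
    exact not_both Δ (RwD_subset Δ w hγ) hneg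
  have hunion : A ∪ B ⊆ Δ.RwD (w * u) := Finset.union_subset hAsub hBsub
  have hcard : (A ∪ B).card = A.card + B.card := Finset.card_union_of_disjoint hdisj
  have hBcard : B.card = (Δ.RwD w).card :=
    Finset.card_image_of_injective _ (u⁻¹ : V ≃ₗ[ℝ] V).injective
  have := Finset.card_le_card hunion
  omega

lemma shortest_unique {μ : V} (hμd : Δ.IsDominant μ) {w m : V ≃ₗ[ℝ] V}
    (hw : w ∈ Δ.weylGroup) (hm : m ∈ Δ.weylGroup) (hMw : Mp Δ μ w) (hMm : Mp Δ μ m)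
    (heq : w μ = m μ) (hlen : (Δ.RwD m).card ≤ (Δ.RwD w).card) : w = m := by
  set u := m⁻¹ * w with hu_def
  have hu : u ∈ Δ.weylGroup := mul_mem (inv_mem hm) hw
  have hufix : u μ = μ := by
    show m⁻¹ (w μ) = μ
    rw [heq]
    exact m.symm_apply_apply μ
  have hmu : m * u = w := by rw [hu_def]; group
  have hu' : u⁻¹ ∈ Δ.weylGroup := inv_mem hu
  have hufix' : (u⁻¹ : V ≃ₗ[ℝ] V) μ = μ := by
    conv_lhs => rw [← hufix]
    exact u.symm_apply_apply μ
  have hwu : w * u⁻¹ = m := by rw [hu_def]; group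
  have h1 := lemV Δ hμd hm hu hMm hufix
  have h2 := lemV Δ hμd hw hu' hMw hufix'
  rw [hmu] at h1
  rw [hwu] at h2
  have hu0 : Δ.RwD u = ∅ := Finset.card_eq_zero.mp (by omega)
  have hone : u = 1 := eq_one_of_RwD_empty Δ hu hu0
  rw [← hmu, hone, mul_one]

lemma sRefl_fixes_of_orth {μ : V} (i : Fin N) (h : ⟪coroot (Δ.simple i), μ⟫ = 0) :
    sRefl (Δ.simple i) μ = μ := by
  rw [sRefl_apply, h, zero_smul, sub_zero]

lemma ws_is_Mp {μ : V} (hμ : Δ.IsDomWeight μ) {ν : V} {m : V ≃ₗ[ℝ] V}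
    (hsh : Δ.shortestTo μ ν m) : Mp Δ μ m := by
  intro i horth hmem
  have hm : m ∈ Δ.weylGroup := hsh.1
  set w' := m * reflE (Δ.simple i) with hw'
  have hw'W : w' ∈ Δ.weylGroup := mul_mem hm (reflE_mem Δ (simple_mem_R Δ i))
  have hw'μ : w' μ = ν := by
    show m (sRefl (Δ.simple i) μ) = ν
    rw [sRefl_fixes_of_orth Δ i horth]
    exact hsh.2.1
  have hcard := card_RwD_mul_reflE Δ hm i
  rw [if_pos hmem] at hcard
  have hpos : 0 < (Δ.RwD m).card := Finset.card_pos.mpr ⟨Δ.simple i, hmem⟩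
  have hle := hsh.2.2 w' hw'W hw'μ
  have hlen1 : Δ.len m = (Δ.RwD m).card := rfl
  have hlen2 : Δ.len w' = (Δ.RwD w').card := rfl
  rw [hlen1, hlen2, hcard] at hle
  omega

/-- The key reduction: the sum over the orbit of terms indexed by the shortest
representatives equals the sum over the whole Weyl group, provided the terms vanish
whenever the inversion set contains a `μ`-orthogonal simple root. -/
lemma orbit_sum_eq {μ : V} (hμ : Δ.IsDomWeight μ) (O : Finset V) (hO : ↑O = Δ.orbit μ)
    (ws : V → (V ≃ₗ[ℝ] V)) (hws : ∀ ν ∈ O, Δ.shortestTo μ ν (ws ν))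
    (WF : Finset (V ≃ₗ[ℝ] V)) (hWF : ↑WF = (Δ.weylGroup : Set (V ≃ₗ[ℝ] V)))
    (T : (V ≃ₗ[ℝ] V) → ℝ)
    (hT0 : ∀ w ∈ Δ.weylGroup, ∀ i, ⟪coroot (Δ.simple i), μ⟫ = 0 →
      Δ.simple i ∈ Δ.RwD w → T w = 0) :
    ∑ ν ∈ O, T (ws ν) = ∑ w ∈ WF, T w := by
  classical
  have hmemWF : ∀ g : V ≃ₗ[ℝ] V, g ∈ WF ↔ g ∈ Δ.weylGroup := by
    intro g
    rw [← Finset.mem_coe, hWF]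
    rfl
  have hmemO : ∀ ν : V, ν ∈ O ↔ ∃ w ∈ Δ.weylGroup, w μ = ν := by
    intro ν
    rw [← Finset.mem_coe, hO]
    rfl
  set P := WF.filter (fun w => Mp Δ μ w) with hP
  have hstep1 : ∑ w ∈ P, T w = ∑ w ∈ WF, T w := by
    apply Finset.sum_subset (Finset.filter_subset _ _)
    intro w hwWF hwP
    have hwW := (hmemWF w).mp hwWF
    have : ¬ Mp Δ μ w := by
      intro hcon
      exact hwP (Finset.mem_filter.mpr ⟨hwWF, hcon⟩)
    unfold Mp at this
    push_neg at this
    obtain ⟨i, horth, hmem⟩ := this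
    exact hT0 w hwW i horth hmem
  rw [← hstep1]
  apply Finset.sum_nbij' (fun ν => ws ν) (fun w => w μ)
  · intro ν hν
    have hsh := hws ν hν
    refine Finset.mem_filter.mpr ⟨(hmemWF _).mpr hsh.1, ws_is_Mp Δ hμ hsh⟩
  · intro w hw
    obtain ⟨hwWF, _⟩ := Finset.mem_filter.mp hw
    exact (hmemO _).mpr ⟨w, (hmemWF w).mp hwWF, rfl⟩
  · intro ν hν
    exact (hws ν hν).2.1
  · intro w hw
    obtain ⟨hwWF, hwM⟩ := Finset.mem_filter.mp hw
    have hwW := (hmemWF w).mp hwWF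
    have hν : w μ ∈ O := (hmemO _).mpr ⟨w, hwW, rfl⟩
    have hsh := hws _ hν
    have hM' := ws_is_Mp Δ hμ hsh
    have hlen : (Δ.RwD (ws (w μ))).card ≤ (Δ.RwD w).card := hsh.2.2 w hwW rfl
    exact (shortest_unique Δ hμ.2 hwW hsh.1 hwM hM' (hsh.2.1).symm hlen).symm
  · intro ν hν
    rfl

/-! ### The positive cone and support estimates in the group algebra -/

/-- The set of nonnegative real combinations of simple coroots with integral pairings
against the simple roots. -/
def SP : Set V := {x | (∀ j, ∃ n : ℤ, ⟪x, Δ.simple j⟫ = (n : ℝ)) ∧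
  ∃ b : Fin N → ℝ, (∀ i, 0 ≤ b i) ∧ x = ∑ i, b i • coroot (Δ.simple i)}

lemma SP_zero : (0 : V) ∈ SP Δ :=
  ⟨fun j => ⟨0, by simp⟩, fun _ => 0, fun _ => le_refl 0, by simp⟩

lemma SP_add {x y : V} (hx : x ∈ SP Δ) (hy : y ∈ SP Δ) : x + y ∈ SP Δ := by
  obtain ⟨hxi, bx, hbx, hxe⟩ := hx
  obtain ⟨hyi, by', hby, hye⟩ := hy
  refine ⟨fun j => ?_, fun i => bx i + by' i, fun i => add_nonneg (hbx i) (hby i), ?_⟩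
  · obtain ⟨n, hn⟩ := hxi j
    obtain ⟨m, hm⟩ := hyi j
    exact ⟨n + m, by push_cast; rw [inner_add_left, hn, hm]⟩
  · rw [hxe, hye, ← Finset.sum_add_distrib]
    exact Finset.sum_congr rfl (fun i _ => (add_smul _ _ _).symm)

lemma SP_coroot {α : V} (hα : α ∈ Δ.Rplus) : coroot α ∈ SP Δ := by
  refine ⟨fun j => Δ.crystal α (Δ.Rplus_subset hα) _ (simple_mem_R Δ j), ?_⟩
  obtain ⟨c, hc⟩ := Δ.pos_combo α hα
  set A := ⟪α, α⟫ with hAdef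
  have hA : 0 < A := inner_self_pos' (Δ.nonzero α (Δ.Rplus_subset hα))
  refine ⟨fun i => (c i : ℝ) * ⟪Δ.simple i, Δ.simple i⟫ / A, fun i => ?_, ?_⟩
  · have hsi : 0 ≤ ⟪Δ.simple i, Δ.simple i⟫ := real_inner_self_nonneg
    positivity
  · rw [show coroot α = (2 / A) • α from rfl]
    conv_lhs => rw [hc]
    rw [Finset.smul_sum]
    apply Finset.sum_congr rfl
    intro i _
    rw [show coroot (Δ.simple i) = (2 / ⟪Δ.simple i, Δ.simple i⟫) • Δ.simple i from rfl]
    rw [smul_smul, smul_smul]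
    congr 1
    have hsi : ⟪Δ.simple i, Δ.simple i⟫ ≠ 0 := inner_self_ne_zero' (simple_ne_zero Δ i)
    have hAne : A ≠ 0 := ne_of_gt hA
    field_simp

lemma SP_inner_rhoH {x : V} (hx : x ∈ SP Δ) :
    0 ≤ ⟪x, rhoH Δ⟫ ∧ (x ≠ 0 → 0 < ⟪x, rhoH Δ⟫) := by
  obtain ⟨_, b, hb, rfl⟩ := hx
  have hval : ⟪∑ i, b i • coroot (Δ.simple i), rhoH Δ⟫
      = ∑ i, b i * (2 / ⟪Δ.simple i, Δ.simple i⟫) := by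
    rw [sum_inner]
    exact Finset.sum_congr rfl (fun i _ => by
      rw [real_inner_smul_left, inner_coroot_rhoH])
  have hterm : ∀ i, 0 ≤ b i * (2 / ⟪Δ.simple i, Δ.simple i⟫) := by
    intro i
    apply mul_nonneg (hb i)
    exact le_of_lt (div_pos two_pos (inner_self_pos' (simple_ne_zero Δ i)))
  constructor
  · rw [hval]
    exact Finset.sum_nonneg (fun i _ => hterm i)
  · intro hne
    rw [hval]
    by_contra hcon
    push_neg at hcon
    have hle : ∑ i, b i * (2 / ⟪Δ.simple i, Δ.simple i⟫) = 0 :=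
      le_antisymm hcon (Finset.sum_nonneg (fun i _ => hterm i))
    have hz := (Finset.sum_eq_zero_iff_of_nonneg
      (s := Finset.univ) (fun i _ => hterm i)).mp hle
    apply hne
    apply Finset.sum_eq_zero
    intro i _
    have hbz : b i = 0 := by
      have h2 : (2 : ℝ) / ⟪Δ.simple i, Δ.simple i⟫ ≠ 0 :=
        ne_of_gt (div_pos two_pos (inner_self_pos' (simple_ne_zero Δ i)))
      rcases mul_eq_zero.mp (hz i (Finset.mem_univ i)) with h | h
      · exact h
      · exact absurd h h2
    rw [hbz, zero_smul]

lemma SP_eq_zero {x : V} (hx : x ∈ SP Δ) (h : ∀ j, ⟪x, Δ.simple j⟫ ≤ 0) : x = 0 := by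
  obtain ⟨hxi, b, hb, hxe⟩ := hx
  have hxx : ⟪x, x⟫ ≤ 0 := by
    nth_rewrite 1 [hxe]
    rw [sum_inner]
    apply Finset.sum_nonpos
    intro i _
    rw [real_inner_smul_left, inner_coroot_left]
    have h1 : 0 ≤ 2 / ⟪Δ.simple i, Δ.simple i⟫ :=
      le_of_lt (div_pos two_pos (inner_self_pos' (simple_ne_zero Δ i)))
    have h2 : ⟪Δ.simple i, x⟫ ≤ 0 := by
      rw [real_inner_comm]
      exact h i
    have := mul_nonneg h1 (neg_nonneg.mpr h2)
    nlinarith [hb i]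
  by_contra hne
  exact absurd hxx (not_le.mpr (inner_self_pos' hne))

lemma support_S_mul {f g : AddMonoidAlgebra ℝ V}
    (hf : ↑f.coeff.support ⊆ SP Δ) (hg : ↑g.coeff.support ⊆ SP Δ) :
    ↑(f * g).coeff.support ⊆ SP Δ := by
  intro x hx
  have hx' := AddMonoidAlgebra.support_coeff_mul_subset f g hx
  obtain ⟨a, ha, b, hb, rfl⟩ := Finset.mem_add.mp hx'
  exact SP_add Δ (hf ha) (hg hb)

lemma support_single_SP {v : V} (hv : v ∈ SP Δ) (c : ℝ) :
    ↑(AddMonoidAlgebra.single (R := ℝ) v c).coeff.support ⊆ SP Δ := by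
  intro x hx
  have := Finsupp.support_single_subset (Finset.mem_coe.mp hx)
  rw [Finset.mem_singleton] at this
  rw [this]
  exact hv

lemma support_prod_SP (s : Finset V) (g : V → AddMonoidAlgebra ℝ V)
    (hg : ∀ α ∈ s, ↑(g α).coeff.support ⊆ SP Δ) :
    ↑(∏ α ∈ s, g α).coeff.support ⊆ SP Δ := by
  classical
  induction s using Finset.induction with
  | empty =>
      rw [Finset.prod_empty]
      exact support_single_SP Δ (SP_zero Δ) 1
  | insert _ _ hα ih =>
      rw [Finset.prod_insert hα]
      exact support_S_mul Δ (hg _ (Finset.mem_insert_self _ _))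
        (ih (fun β hβ => hg β (Finset.mem_insert_of_mem hβ)))

lemma support_sum_SP {ι : Type*} (s : Finset ι) (g : ι → AddMonoidAlgebra ℝ V)
    (hg : ∀ w ∈ s, ↑(g w).coeff.support ⊆ SP Δ) :
    ↑(∑ w ∈ s, g w).coeff.support ⊆ SP Δ := by
  intro x hx
  rw [AddMonoidAlgebra.coeff_sum] at hx
  have := Finsupp.support_finset_sum (Finset.mem_coe.mp hx)
  obtain hmem := Finset.mem_biUnion.mp this
  obtain ⟨w, hw, hxw⟩ := hmem
  exact hg w hw hxw

lemma apply_zero_mul {f g : AddMonoidAlgebra ℝ V}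
    (hf : ↑f.coeff.support ⊆ SP Δ) (hg : ↑g.coeff.support ⊆ SP Δ) :
    (f * g).coeff 0 = f.coeff 0 * g.coeff 0 := by
  classical
  rw [AddMonoidAlgebra.coeff_mul]
  rw [Finsupp.sum]
  have hterm : ∀ a ∈ f.coeff.support,
      (Finsupp.sum g.coeff fun a₂ b₂ => if a + a₂ = 0 then f.coeff a * b₂ else 0)
        = if a = 0 then f.coeff 0 * g.coeff 0 else 0 := by
    intro a ha
    by_cases ha0 : a = 0
    · subst ha0
      rw [if_pos rfl, Finsupp.sum]
      have hc : ∀ b ∈ g.coeff.support, (if (0:V) + b = 0 then f.coeff 0 * g.coeff b else 0)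
          = if b = 0 then f.coeff 0 * g.coeff 0 else 0 := by
        intro b _
        by_cases hb0 : b = 0
        · subst hb0; simp
        · rw [if_neg (by simpa using hb0), if_neg hb0]
      rw [Finset.sum_congr rfl hc, Finset.sum_ite_eq' g.coeff.support 0 (fun _ => f.coeff 0 * g.coeff 0)]
      by_cases h0g : (0:V) ∈ g.coeff.support
      · rw [if_pos h0g]
      · rw [if_neg h0g, Finsupp.notMem_support_iff.mp h0g, mul_zero]
    · rw [if_neg ha0, Finsupp.sum]
      apply Finset.sum_eq_zero
      intro b hb
      rw [if_neg]
      intro hab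
      have h1 : 0 < ⟪a, rhoH Δ⟫ := (SP_inner_rhoH Δ (hf ha)).2 ha0
      have h2 : 0 ≤ ⟪b, rhoH Δ⟫ := (SP_inner_rhoH Δ (hg hb)).1
      have h3 : ⟪a + b, rhoH Δ⟫ = 0 := by rw [hab, inner_zero_left]
      rw [inner_add_left] at h3
      linarith
  rw [Finset.sum_congr rfl hterm, Finset.sum_ite_eq' f.coeff.support 0 (fun _ => f.coeff 0 * g.coeff 0)]
  by_cases h0f : (0:V) ∈ f.coeff.support
  · rw [if_pos h0f]
  · rw [if_neg h0f, Finsupp.notMem_support_iff.mp h0f, zero_mul]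

/-- The descent lemma: a finitely supported function on the positive cone that is
"antisymmetric" about `ρ^∨` and vanishes at `0` vanishes identically. -/
lemma descent (H : V →₀ ℝ)
    (hsupp : ↑H.support ⊆ SP Δ)
    (hrel : ∀ (i : Fin N) (m : V), H (sRefl (Δ.simple i) m) = -(H (coroot (Δ.simple i) + m)))
    (h0 : H 0 = 0) : H = 0 := by
  classical
  by_contra hne
  have hsuppne : H.support.Nonempty := Finsupp.support_nonempty_iff.mpr hne
  obtain ⟨u, hu, hmin⟩ := Finset.exists_min_image H.support (fun u => ⟪u, rhoH Δ⟫) hsuppne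
  set n := u - rhoH Δ with hn
  have hun : u = n + rhoH Δ := by rw [hn]; abel
  have hkey : ∀ i : Fin N, H (sRefl (Δ.simple i) n + rhoH Δ) = -(H u) := by
    intro i
    have h1 := hrel i (n + rhoH Δ - coroot (Δ.simple i))
    have h2 : sRefl (Δ.simple i) (n + rhoH Δ - coroot (Δ.simple i))
        = sRefl (Δ.simple i) n + rhoH Δ := by
      rw [show n + rhoH Δ - coroot (Δ.simple i)
        = n + (rhoH Δ - coroot (Δ.simple i)) from by abel]
      rw [sRefl_add, ← sRefl_rhoH Δ i, sRefl_involutive]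
    have h3 : coroot (Δ.simple i) + (n + rhoH Δ - coroot (Δ.simple i)) = u := by
      rw [hun]; abel
    rw [h2, h3] at h1
    exact h1
  have hHu : H u ≠ 0 := Finsupp.mem_support_iff.mp hu
  have hnonpos : ∀ i, ⟪Δ.simple i, n⟫ ≤ 0 := by
    intro i
    by_contra hpos
    push_neg at hpos
    have hHne : H (sRefl (Δ.simple i) n + rhoH Δ) ≠ 0 := by
      rw [hkey i]
      simpa using hHu
    have hmem : sRefl (Δ.simple i) n + rhoH Δ ∈ H.support := Finsupp.mem_support_iff.mpr hHne
    have hval := hmin _ hmem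
    have hs : ⟪sRefl (Δ.simple i) n, rhoH Δ⟫ = ⟪n, rhoH Δ⟫ - ⟪n, coroot (Δ.simple i)⟫ := by
      rw [sRefl_symm, sRefl_rhoH, inner_sub_right]
    have hcpos : 0 < ⟪n, coroot (Δ.simple i)⟫ := by
      have he : ⟪n, coroot (Δ.simple i)⟫
          = (2 / ⟪Δ.simple i, Δ.simple i⟫) * ⟪Δ.simple i, n⟫ := by
        rw [real_inner_comm, inner_coroot_left]
      rw [he]
      exact mul_pos (div_pos two_pos (inner_self_pos' (simple_ne_zero Δ i))) hpos
    have hlt : ⟪sRefl (Δ.simple i) n + rhoH Δ, rhoH Δ⟫ < ⟪u, rhoH Δ⟫ := by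
      rw [inner_add_left, hs, hun, inner_add_left]
      linarith
    linarith
  have hstrict : ∀ i, ⟪Δ.simple i, n⟫ < 0 := by
    intro i
    rcases lt_or_eq_of_le (hnonpos i) with h | h
    · exact h
    · exfalso
      have hfix : sRefl (Δ.simple i) n = n := sRefl_fixed h
      have h2 := hkey i
      rw [hfix, ← hun] at h2
      have : H u = 0 := by linarith [h2]
      exact hHu this
  have huSP : u ∈ SP Δ := hsupp hu
  have hzero : ∀ j, ⟪u, Δ.simple j⟫ ≤ 0 := by
    intro j
    obtain ⟨z, hz⟩ := huSP.1 j
    have h1 : ⟪u, Δ.simple j⟫ < 1 := by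
      have he : ⟪u, Δ.simple j⟫ = ⟪n, Δ.simple j⟫ + ⟪Δ.simple j, rhoH Δ⟫ := by
        rw [hun, inner_add_left, real_inner_comm (rhoH Δ) (Δ.simple j)]
      rw [he, inner_simple_rhoH]
      have h2 : ⟪n, Δ.simple j⟫ < 0 := by
        rw [real_inner_comm]
        exact hstrict j
      linarith
    rw [hz] at h1 ⊢
    have : z < 1 := by exact_mod_cast h1
    exact_mod_cast (by omega : z ≤ 0)
  have hu0 : u = 0 := SP_eq_zero Δ huSP hzero
  rw [hu0] at hu
  exact (Finsupp.mem_support_iff.mp hu) h0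

/-! ### The Macdonald identity in the group algebra -/

variable (q : ℝ) (k : V → ℝ)

noncomputable def fA (w : V ≃ₗ[ℝ] V) (α : V) : AddMonoidAlgebra ℝ V :=
  if α ∈ Δ.RwD w then
    AddMonoidAlgebra.single 0 (q ^ k α) - AddMonoidAlgebra.single (coroot α) 1
  else
    AddMonoidAlgebra.single 0 1 - AddMonoidAlgebra.single (coroot α) (q ^ k α)

noncomputable def termA (w : V ≃ₗ[ℝ] V) : AddMonoidAlgebra ℝ V :=
  ∏ α ∈ Δ.Rplus, fA Δ q k w α

noncomputable def DD : AddMonoidAlgebra ℝ V :=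
  ∏ α ∈ Δ.Rplus, (AddMonoidAlgebra.single 0 1 - AddMonoidAlgebra.single (coroot α) (1:ℝ))

noncomputable def sigmaRH (γ : V) : AddMonoidAlgebra ℝ V →+* AddMonoidAlgebra ℝ V :=
  AddMonoidAlgebra.mapDomainRingHom ℝ (reflLM γ).toAddMonoidHom

lemma sigmaRH_apply (γ : V) (f : AddMonoidAlgebra ℝ V) :
    (sigmaRH γ f).coeff = Finsupp.mapDomain (sRefl γ) f.coeff := rfl

lemma sigmaRH_single (γ v : V) (c : ℝ) :
    sigmaRH γ (AddMonoidAlgebra.single v c) = AddMonoidAlgebra.single (sRefl γ v) c := by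
  refine AddMonoidAlgebra.ext ?_
  rw [sigmaRH_apply]
  exact Finsupp.mapDomain_single

lemma sRefl_zero (γ : V) : sRefl γ 0 = 0 := (reflLM γ).map_zero

lemma sigma_fA {w : V ≃ₗ[ℝ] V} (hw : w ∈ Δ.weylGroup) (hk : Δ.WInvPar k) (i : Fin N)
    {β : V} (hβ : β ∈ Δ.Rplus) (hne : β ≠ Δ.simple i) :
    sigmaRH (Δ.simple i) (fA Δ q k w (sRefl (Δ.simple i) β))
      = fA Δ q k (w * reflE (Δ.simple i)) β := by
  have hmemiff := mem_RwD_mul_reflE Δ hw i hβ hne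
  have hco : sRefl (Δ.simple i) (coroot (sRefl (Δ.simple i) β)) = coroot β := by
    rw [sRefl_coroot, sRefl_involutive]
  have hkk : k (sRefl (Δ.simple i) β) = k β := k_sRefl Δ hk i (Δ.Rplus_subset hβ)
  unfold fA
  by_cases hmem : sRefl (Δ.simple i) β ∈ Δ.RwD w
  · rw [if_pos hmem, if_pos (hmemiff.mpr hmem), map_sub, sigmaRH_single, sigmaRH_single,
      hco, sRefl_zero, hkk]
  · rw [if_neg hmem, if_neg (fun hc => hmem (hmemiff.mp hc)), map_sub, sigmaRH_single,
      sigmaRH_single, hco, sRefl_zero, hkk]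

lemma sigma_fA_simple {w : V ≃ₗ[ℝ] V} (hw : w ∈ Δ.weylGroup) (i : Fin N) :
    sigmaRH (Δ.simple i) (fA Δ q k w (Δ.simple i))
      = AddMonoidAlgebra.single (-(coroot (Δ.simple i))) (-1 : ℝ)
          * fA Δ q k (w * reflE (Δ.simple i)) (Δ.simple i) := by
  have hco : sRefl (Δ.simple i) (coroot (Δ.simple i)) = -(coroot (Δ.simple i)) := by
    rw [sRefl_coroot, sRefl_self (simple_ne_zero Δ i), coroot_neg]
  have hmemiff := simple_mem_RwD_mul_reflE Δ hw i
  unfold fA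
  by_cases hmem : Δ.simple i ∈ Δ.RwD w
  · rw [if_pos hmem, if_neg (by rw [hmemiff]; exact not_not_intro hmem)]
    rw [map_sub, sigmaRH_single, sigmaRH_single, sRefl_zero, hco]
    rw [mul_sub, AddMonoidAlgebra.single_mul_single, AddMonoidAlgebra.single_mul_single]
    simp only [add_zero, neg_add_cancel, neg_one_mul, one_mul, mul_one, AddMonoidAlgebra.single_neg]
    abel
  · rw [if_neg hmem, if_pos (hmemiff.mpr hmem)]
    rw [map_sub, sigmaRH_single, sigmaRH_single, sRefl_zero, hco]
    rw [mul_sub, AddMonoidAlgebra.single_mul_single, AddMonoidAlgebra.single_mul_single]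
    simp only [add_zero, neg_add_cancel, neg_one_mul, one_mul, mul_one, AddMonoidAlgebra.single_neg]
    abel

lemma sigma_termA {w : V ≃ₗ[ℝ] V} (hw : w ∈ Δ.weylGroup) (hk : Δ.WInvPar k) (i : Fin N) :
    sigmaRH (Δ.simple i) (termA Δ q k w)
      = AddMonoidAlgebra.single (-(coroot (Δ.simple i))) (-1 : ℝ)
          * termA Δ q k (w * reflE (Δ.simple i)) := by
  unfold termA
  rw [map_prod]
  rw [← Finset.prod_erase_mul _ _ (Δ.simple_mem i)]
  rw [← Finset.prod_erase_mul _ (fun α => fA Δ q k (w * reflE (Δ.simple i)) α)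
    (Δ.simple_mem i)]
  have herase : ∏ α ∈ Δ.Rplus.erase (Δ.simple i), sigmaRH (Δ.simple i) (fA Δ q k w α)
      = ∏ α ∈ Δ.Rplus.erase (Δ.simple i), fA Δ q k (w * reflE (Δ.simple i)) α := by
    have hre := prod_erase_reindex Δ i (fun α => sigmaRH (Δ.simple i) (fA Δ q k w α))
    rw [← hre]
    refine Finset.prod_congr rfl fun β hβ => ?_
    obtain ⟨hne, hmem⟩ := Finset.mem_erase.mp hβ
    exact sigma_fA Δ q k hw hk i hmem hne
  rw [herase, sigma_fA_simple Δ q k hw i]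
  ring

lemma sigma_DD (i : Fin N) :
    sigmaRH (Δ.simple i) (DD Δ)
      = AddMonoidAlgebra.single (-(coroot (Δ.simple i))) (-1 : ℝ) * DD Δ := by
  have hco : sRefl (Δ.simple i) (coroot (Δ.simple i)) = -(coroot (Δ.simple i)) := by
    rw [sRefl_coroot, sRefl_self (simple_ne_zero Δ i), coroot_neg]
  unfold DD
  rw [map_prod]
  rw [← Finset.prod_erase_mul _ _ (Δ.simple_mem i)]
  rw [← Finset.prod_erase_mul _
    (fun α => AddMonoidAlgebra.single (0:V) (1:ℝ) - AddMonoidAlgebra.single (coroot α) (1:ℝ))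
    (Δ.simple_mem i)]
  have herase : ∏ α ∈ Δ.Rplus.erase (Δ.simple i),
      sigmaRH (Δ.simple i)
        (AddMonoidAlgebra.single (0:V) (1:ℝ) - AddMonoidAlgebra.single (coroot α) (1:ℝ))
      = ∏ α ∈ Δ.Rplus.erase (Δ.simple i),
        (AddMonoidAlgebra.single (0:V) (1:ℝ) - AddMonoidAlgebra.single (coroot α) (1:ℝ)) := by
    have hre := prod_erase_reindex Δ i
      (fun α => AddMonoidAlgebra.single (0:V) (1:ℝ)
        - AddMonoidAlgebra.single (coroot α) (1:ℝ))
    rw [← hre]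
    refine Finset.prod_congr rfl fun β hβ => ?_
    rw [map_sub, sigmaRH_single, sigmaRH_single, sRefl_zero, sRefl_coroot]
  rw [herase]
  have hsimplefac : sigmaRH (Δ.simple i)
      (AddMonoidAlgebra.single (0:V) (1:ℝ)
        - AddMonoidAlgebra.single (coroot (Δ.simple i)) (1:ℝ))
      = AddMonoidAlgebra.single (-(coroot (Δ.simple i))) (-1:ℝ)
        * (AddMonoidAlgebra.single (0:V) (1:ℝ)
          - AddMonoidAlgebra.single (coroot (Δ.simple i)) (1:ℝ)) := by
    rw [map_sub, sigmaRH_single, sigmaRH_single, sRefl_zero, hco]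
    rw [mul_sub, AddMonoidAlgebra.single_mul_single, AddMonoidAlgebra.single_mul_single]
    simp only [add_zero, neg_add_cancel, neg_one_mul, one_mul, mul_one, AddMonoidAlgebra.single_neg]
    abel
  rw [hsimplefac]
  ring

lemma support_sub_SP {f g : AddMonoidAlgebra ℝ V}
    (hf : ↑f.coeff.support ⊆ SP Δ) (hg : ↑g.coeff.support ⊆ SP Δ) :
    ↑(f - g).coeff.support ⊆ SP Δ := by
  intro x hx
  rw [AddMonoidAlgebra.coeff_sub] at hx
  rcases Finset.mem_union.mp (Finsupp.support_sub (Finset.mem_coe.mp hx)) with h | h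
  · exact hf h
  · exact hg h

lemma support_fA (w : V ≃ₗ[ℝ] V) {α : V} (hα : α ∈ Δ.Rplus) :
    ↑(fA Δ q k w α).coeff.support ⊆ SP Δ := by
  unfold fA
  split_ifs <;>
    exact support_sub_SP Δ (support_single_SP Δ (SP_zero Δ) _)
      (support_single_SP Δ (SP_coroot Δ hα) _)

lemma support_termA (w : V ≃ₗ[ℝ] V) : ↑(termA Δ q k w).coeff.support ⊆ SP Δ :=
  support_prod_SP Δ _ _ (fun α hα => support_fA Δ q k w hα)

lemma support_DD : ↑(DD Δ).coeff.support ⊆ SP Δ :=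
  support_prod_SP Δ _ _ (fun α hα =>
    support_sub_SP Δ (support_single_SP Δ (SP_zero Δ) _)
      (support_single_SP Δ (SP_coroot Δ hα) _))

lemma prod_apply_zero : ∀ (s : Finset V) (g : V → AddMonoidAlgebra ℝ V),
    (∀ α ∈ s, ↑(g α).coeff.support ⊆ SP Δ) →
    (∏ α ∈ s, g α).coeff 0 = ∏ α ∈ s, (g α).coeff 0 := by
  intro s
  induction s using Finset.induction with
  | empty =>
      intro g _
      rw [Finset.prod_empty, Finset.prod_empty, AddMonoidAlgebra.one_def,
        AddMonoidAlgebra.coeff_single, Finsupp.single_eq_same]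
  | @insert a t ha ih =>
      intro g hg
      rw [Finset.prod_insert ha, Finset.prod_insert ha,
        apply_zero_mul Δ (hg a (Finset.mem_insert_self a t))
          (support_prod_SP Δ t g (fun β hβ => hg β (Finset.mem_insert_of_mem hβ))),
        ih g (fun β hβ => hg β (Finset.mem_insert_of_mem hβ))]

lemma fA_zero (w : V ≃ₗ[ℝ] V) {α : V} (hα : α ∈ Δ.Rplus) :
    (fA Δ q k w α).coeff 0 = if α ∈ Δ.RwD w then q ^ k α else 1 := by
  have hc0 : coroot α ≠ 0 := fun h =>
    Δ.nonzero α (Δ.Rplus_subset hα) (coroot_eq_zero_iff.mp h)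
  unfold fA
  split_ifs with h
  · rw [AddMonoidAlgebra.coeff_sub, Finsupp.sub_apply, AddMonoidAlgebra.coeff_single,
      AddMonoidAlgebra.coeff_single, Finsupp.single_eq_same,
      Finsupp.single_eq_of_ne' hc0, sub_zero]
  · rw [AddMonoidAlgebra.coeff_sub, Finsupp.sub_apply, AddMonoidAlgebra.coeff_single,
      AddMonoidAlgebra.coeff_single, Finsupp.single_eq_same,
      Finsupp.single_eq_of_ne' hc0, sub_zero]

lemma termA_zero (w : V ≃ₗ[ℝ] V) :
    (termA Δ q k w).coeff 0 = ∏ α ∈ Δ.RwD w, q ^ k α := by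
  unfold termA
  rw [prod_apply_zero Δ _ _ (fun α hα => support_fA Δ q k w hα)]
  rw [Finset.prod_congr rfl (fun α hα => fA_zero Δ q k w hα)]
  rw [← Finset.prod_filter]
  congr 1
  rw [Finset.filter_mem_eq_inter]
  exact Finset.inter_eq_right.mpr (RwD_subset Δ w)

lemma DD_zero : (DD Δ).coeff 0 = 1 := by
  unfold DD
  rw [prod_apply_zero Δ _ _ (fun α hα =>
    support_sub_SP Δ (support_single_SP Δ (SP_zero Δ) _)
      (support_single_SP Δ (SP_coroot Δ hα) _))]
  apply Finset.prod_eq_one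
  intro α hα
  have hc0 : coroot α ≠ 0 := fun h =>
    Δ.nonzero α (Δ.Rplus_subset hα) (coroot_eq_zero_iff.mp h)
  rw [AddMonoidAlgebra.coeff_sub, Finsupp.sub_apply, AddMonoidAlgebra.coeff_single,
    AddMonoidAlgebra.coeff_single, Finsupp.single_eq_same, Finsupp.single_eq_of_ne' hc0, sub_zero]

/-- The Macdonald identity in the group algebra `ℝ[V]`. -/
lemma star (hk : Δ.WInvPar k) (WF : Finset (V ≃ₗ[ℝ] V))
    (hWF : ↑WF = (Δ.weylGroup : Set (V ≃ₗ[ℝ] V))) :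
    ∑ w ∈ WF, termA Δ q k w
      = AddMonoidAlgebra.single 0 (∑ w ∈ WF, ∏ α ∈ Δ.RwD w, q ^ k α) * DD Δ := by
  have hmemWF : ∀ g : V ≃ₗ[ℝ] V, g ∈ WF ↔ g ∈ Δ.weylGroup := by
    intro g
    rw [← Finset.mem_coe, hWF]
    rfl
  set PT : ℝ := ∑ w ∈ WF, ∏ α ∈ Δ.RwD w, q ^ k α with hPT
  set H : AddMonoidAlgebra ℝ V :=
    (∑ w ∈ WF, termA Δ q k w) - AddMonoidAlgebra.single 0 PT * DD Δ with hH
  have hsigmaFF : ∀ i : Fin N,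
      sigmaRH (Δ.simple i) (∑ w ∈ WF, termA Δ q k w)
        = AddMonoidAlgebra.single (-(coroot (Δ.simple i))) (-1:ℝ)
          * ∑ w ∈ WF, termA Δ q k w := by
    intro i
    rw [map_sum, Finset.mul_sum]
    apply Finset.sum_nbij' (fun w => w * reflE (Δ.simple i)) (fun w => w * reflE (Δ.simple i))
    · intro w hw
      exact (hmemWF _).mpr (mul_mem ((hmemWF w).mp hw) (reflE_mem Δ (simple_mem_R Δ i)))
    · intro w hw
      exact (hmemWF _).mpr (mul_mem ((hmemWF w).mp hw) (reflE_mem Δ (simple_mem_R Δ i)))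
    · intro w _
      rw [mul_assoc, reflE_sq, mul_one]
    · intro w _
      rw [mul_assoc, reflE_sq, mul_one]
    · intro w hw
      exact sigma_termA Δ q k ((hmemWF w).mp hw) hk i
  have hsupp : ↑H.coeff.support ⊆ SP Δ := by
    rw [hH]
    apply support_sub_SP Δ
    · exact support_sum_SP Δ _ _ (fun w _ => support_termA Δ q k w)
    · intro x hx
      have := AddMonoidAlgebra.support_coeff_mul_subset _ _ (Finset.mem_coe.mp hx)
      obtain ⟨a, ha, b, hb, rfl⟩ := Finset.mem_add.mp this
      refine SP_add Δ ?_ (support_DD Δ hb)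
      have h1 := Finsupp.support_single_subset ha
      rw [Finset.mem_singleton] at h1
      rw [h1]
      exact SP_zero Δ
  have hσ : ∀ i : Fin N, sigmaRH (Δ.simple i) H
      = AddMonoidAlgebra.single (-(coroot (Δ.simple i))) (-1:ℝ) * H := by
    intro i
    rw [hH, map_sub, hsigmaFF i, map_mul, sigma_DD Δ i, sigmaRH_single, sRefl_zero, mul_sub]
    ring
  have hrel : ∀ (i : Fin N) (m : V),
      H.coeff (sRefl (Δ.simple i) m) = -(H.coeff (coroot (Δ.simple i) + m)) := by
    intro i m
    have h1 : (Finsupp.mapDomain (sRefl (Δ.simple i)) H.coeff) m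
        = H.coeff (sRefl (Δ.simple i) m) := by
      conv_lhs => rw [show m = sRefl (Δ.simple i) (sRefl (Δ.simple i) m)
        from (sRefl_involutive _ m).symm]
      exact Finsupp.mapDomain_apply (sRefl_involutive (Δ.simple i)).injective H.coeff _
    have h2 : (sigmaRH (Δ.simple i) H).coeff m
        = (AddMonoidAlgebra.single (-(coroot (Δ.simple i))) (-1:ℝ) * H).coeff m := by
      rw [hσ i]
    rw [sigmaRH_apply, h1] at h2
    rw [h2, AddMonoidAlgebra.coeff_single_mul_apply, neg_neg, neg_one_mul]
  have h0 : H.coeff 0 = 0 := by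
    rw [hH, AddMonoidAlgebra.coeff_sub, Finsupp.sub_apply, AddMonoidAlgebra.coeff_sum,
      Finsupp.finset_sum_apply]
    rw [Finset.sum_congr rfl (fun w (_ : w ∈ WF) => termA_zero Δ q k w)]
    rw [apply_zero_mul Δ (support_single_SP Δ (SP_zero Δ) PT) (support_DD Δ),
      AddMonoidAlgebra.coeff_single, Finsupp.single_eq_same, DD_zero, mul_one, sub_self]
  have hzero : H = 0 := AddMonoidAlgebra.ext ((descent Δ H.coeff hsupp hrel h0).trans rfl)
  have := sub_eq_zero.mp hzero
  exact this

end RSD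

/-- Evaluation of the group algebra at the character `v ↦ c^⟨v,λ⟩`. -/
noncomputable def evalHom (lam : V) {c : ℝ} (hc : 0 < c) : AddMonoidAlgebra ℝ V →ₐ[ℝ] ℝ :=
  AddMonoidAlgebra.lift ℝ ℝ V
    { toFun := fun v => c ^ (⟪(Multiplicative.toAdd v : V), lam⟫ : ℝ),
      map_one' := by
        show c ^ (⟪(Multiplicative.toAdd (1 : Multiplicative V) : V), lam⟫ : ℝ) = 1
        rw [show (Multiplicative.toAdd (1 : Multiplicative V) : V) = 0 from rfl]
        rw [inner_zero_left, Real.rpow_zero],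
      map_mul' := fun x y => by
        show c ^ (⟪(Multiplicative.toAdd (x * y) : V), lam⟫ : ℝ) = _
        rw [show (Multiplicative.toAdd (x * y) : V)
          = Multiplicative.toAdd x + Multiplicative.toAdd y from rfl]
        rw [inner_add_left, Real.rpow_add hc] }

lemma evalHom_single (lam : V) {c : ℝ} (hc : 0 < c) (v : V) (r : ℝ) :
    evalHom lam hc (AddMonoidAlgebra.single v r) = r * c ^ (⟪v, lam⟫ : ℝ) := by
  unfold evalHom
  rw [AddMonoidAlgebra.lift_single]
  rfl

end Aux
/-- the orbit-sum form of Macdonald's Poincaré-polynomial identity, with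
`t_α = q^{k_α}`:
`Σ_{μ̃∈W(μ)} ∏_{α^∨∈R^∨_{w_μ̃}} t_α(1-t_α⁻¹q^{ε⟨α^∨,μ+ρ_k⟩})/(1-t_αq^{ε⟨α^∨,μ+ρ_k⟩})
  = W(t) ∏_{α∈R_+} (1-q^{ε⟨α^∨,μ+ρ_k⟩})/(1-t_αq^{ε⟨α^∨,μ+ρ_k⟩})`,
where `W(t) = Σ_{w∈W} ∏_{α^∨∈R_w^∨} t_α` is the Poincaré polynomial. -/
theorem statement17 {V : Type*} [NormedAddCommGroup V] [InnerProductSpace ℝ V]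
    [FiniteDimensional ℝ V] {N : ℕ} (Δ : RootSystemData V N)
    (μ : V) (hμ : Δ.IsDomWeight μ)
    (q : ℝ) (hq : 0 < q) (hq1 : q ≠ 1)
    (k : V → ℝ) (hkpos : ∀ α ∈ Δ.R, 0 < k α) (hk : Δ.WInvPar k)
    (ε : ℝ) (hε : ε = 1 ∨ ε = -1)
    (O : Finset V) (hO : ↑O = Δ.orbit μ)
    (ws : V → (V ≃ₗ[ℝ] V)) (hws : ∀ ν ∈ O, Δ.shortestTo μ ν (ws ν))
    (WF : Finset (V ≃ₗ[ℝ] V)) (hWF : ↑WF = (Δ.weylGroup : Set (V ≃ₗ[ℝ] V)))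
    (hden : ∀ α ∈ Δ.Rplus,
      1 - q ^ (k α) * q ^ (ε * ⟪coroot α, μ + Δ.rhok k⟫) ≠ 0) :
    ∑ ν ∈ O, ∏ α ∈ Δ.RwD (ws ν),
      q ^ (k α) * (1 - (q ^ (k α))⁻¹ * q ^ (ε * ⟪coroot α, μ + Δ.rhok k⟫)) /
        (1 - q ^ (k α) * q ^ (ε * ⟪coroot α, μ + Δ.rhok k⟫))
    = (∑ w ∈ WF, ∏ α ∈ Δ.RwD w, q ^ (k α)) *
        ∏ α ∈ Δ.Rplus,
          (1 - q ^ (ε * ⟪coroot α, μ + Δ.rhok k⟫)) /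
            (1 - q ^ (k α) * q ^ (ε * ⟪coroot α, μ + Δ.rhok k⟫)) := by
  classical
  have hq0 : q ≠ 0 := ne_of_gt hq
  have htne : ∀ α : V, q ^ (k α) ≠ 0 := fun α => (Real.rpow_pos_of_pos hq _).ne'
  set TT : (V ≃ₗ[ℝ] V) → ℝ := fun w => ∏ α ∈ Δ.RwD w,
    (q ^ k α - q ^ (ε * ⟪coroot α, μ + Δ.rhok k⟫))
      / (1 - q ^ k α * q ^ (ε * ⟪coroot α, μ + Δ.rhok k⟫)) with hTT
  -- Step 1: rewrite the left-hand side as a sum of `TT`s.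
  have hLHS : (∑ ν ∈ O, ∏ α ∈ Δ.RwD (ws ν),
      q ^ (k α) * (1 - (q ^ (k α))⁻¹ * q ^ (ε * ⟪coroot α, μ + Δ.rhok k⟫)) /
        (1 - q ^ (k α) * q ^ (ε * ⟪coroot α, μ + Δ.rhok k⟫)))
      = ∑ ν ∈ O, TT (ws ν) := by
    apply Finset.sum_congr rfl
    intro ν _
    rw [hTT]
    apply Finset.prod_congr rfl
    intro α _
    congr 1
    rw [mul_sub, mul_one, mul_inv_cancel_left₀ (htne α)]
  rw [hLHS]
  -- Step 2: the orbit sum equals the full Weyl-group sum.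
  have hT0 : ∀ w ∈ Δ.weylGroup, ∀ i, ⟪coroot (Δ.simple i), μ⟫ = 0 →
      Δ.simple i ∈ Δ.RwD w → TT w = 0 := by
    intro w hw i horth hmem
    have hpair : ⟪coroot (Δ.simple i), μ + Δ.rhok k⟫ = k (Δ.simple i) := by
      rw [inner_add_right, horth, zero_add, Aux.inner_coroot_rhok Δ hk i]
    rcases hε with hε1 | hε1
    · rw [hTT]
      apply Finset.prod_eq_zero hmem
      rw [hpair, hε1, one_mul, sub_self, zero_div]
    · exfalso
      apply hden (Δ.simple i) (Δ.simple_mem i)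
      rw [hpair, hε1, ← Real.rpow_add hq]
      rw [show k (Δ.simple i) + -1 * k (Δ.simple i) = 0 from by ring]
      rw [Real.rpow_zero, sub_self]
  rw [Aux.orbit_sum_eq Δ hμ O hO ws hws WF hWF TT hT0]
  -- Step 3: evaluate the group-algebra Macdonald identity.
  set ev := Aux.evalHom (V := V) (ε • (μ + Δ.rhok k)) hq with hev
  have hevsingle0 : ∀ r : ℝ, ev (AddMonoidAlgebra.single (0:V) r) = r := by
    intro r
    rw [hev, Aux.evalHom_single, inner_zero_left, Real.rpow_zero, mul_one]
  have hevsingleC : ∀ (α : V) (r : ℝ),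
      ev (AddMonoidAlgebra.single (coroot α) r)
        = r * q ^ (ε * ⟪coroot α, μ + Δ.rhok k⟫) := by
    intro α r
    rw [hev, Aux.evalHom_single, real_inner_smul_right]
  have hev_fA : ∀ (w : V ≃ₗ[ℝ] V), ∀ α ∈ Δ.Rplus,
      ev (Aux.fA Δ q k w α) = if α ∈ Δ.RwD w then
        q ^ k α - q ^ (ε * ⟪coroot α, μ + Δ.rhok k⟫)
      else 1 - q ^ k α * q ^ (ε * ⟪coroot α, μ + Δ.rhok k⟫) := by
    intro w α _
    unfold Aux.fA
    split_ifs with h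
    · rw [map_sub, hevsingle0, hevsingleC, one_mul]
    · rw [map_sub, hevsingle0, hevsingleC]
  have hev_term : ∀ w : V ≃ₗ[ℝ] V, ev (Aux.termA Δ q k w)
      = ∏ α ∈ Δ.Rplus, (if α ∈ Δ.RwD w then
          q ^ k α - q ^ (ε * ⟪coroot α, μ + Δ.rhok k⟫)
        else 1 - q ^ k α * q ^ (ε * ⟪coroot α, μ + Δ.rhok k⟫)) := by
    intro w
    unfold Aux.termA
    rw [map_prod]
    exact Finset.prod_congr rfl (fun α hα => hev_fA w α hα)
  have hev_DD : ev (Aux.DD Δ)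
      = ∏ α ∈ Δ.Rplus, (1 - q ^ (ε * ⟪coroot α, μ + Δ.rhok k⟫)) := by
    unfold Aux.DD
    rw [map_prod]
    apply Finset.prod_congr rfl
    intro α _
    rw [map_sub, hevsingle0, hevsingleC, one_mul]
  have hstar := congrArg ev (Aux.star Δ q k hk WF hWF)
  rw [map_sum, map_mul, hevsingle0, hev_DD,
    Finset.sum_congr rfl (fun w (_ : w ∈ WF) => hev_term w)] at hstar
  -- Step 4: convert each summand.
  have hDne : (∏ α ∈ Δ.Rplus,
      (1 - q ^ k α * q ^ (ε * ⟪coroot α, μ + Δ.rhok k⟫))) ≠ 0 :=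
    Finset.prod_ne_zero_iff.mpr (fun α hα => hden α hα)
  have hconv : ∀ w ∈ WF, (∏ α ∈ Δ.Rplus, (if α ∈ Δ.RwD w then
        q ^ k α - q ^ (ε * ⟪coroot α, μ + Δ.rhok k⟫)
      else 1 - q ^ k α * q ^ (ε * ⟪coroot α, μ + Δ.rhok k⟫)))
      = TT w * ∏ α ∈ Δ.Rplus, (1 - q ^ k α * q ^ (ε * ⟪coroot α, μ + Δ.rhok k⟫)) := by
    intro w _
    have hfil : Δ.Rplus.filter (fun α => α ∈ Δ.RwD w) = Δ.RwD w := by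
      rw [Finset.filter_mem_eq_inter]
      exact Finset.inter_eq_right.mpr (Aux.RwD_subset Δ w)
    rw [Finset.prod_ite, hfil]
    rw [← Finset.prod_filter_mul_prod_filter_not Δ.Rplus (fun α => α ∈ Δ.RwD w)
      (fun α => 1 - q ^ k α * q ^ (ε * ⟪coroot α, μ + Δ.rhok k⟫)), hfil]
    have h1 : TT w * (∏ α ∈ Δ.RwD w,
        (1 - q ^ k α * q ^ (ε * ⟪coroot α, μ + Δ.rhok k⟫)))
        = ∏ α ∈ Δ.RwD w, (q ^ k α - q ^ (ε * ⟪coroot α, μ + Δ.rhok k⟫)) := by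
      rw [hTT, ← Finset.prod_mul_distrib]
      apply Finset.prod_congr rfl
      intro α hα
      exact div_mul_cancel₀ _ (hden α (Aux.RwD_subset Δ w hα))
    rw [← mul_assoc, h1]
  rw [Finset.sum_congr rfl hconv, ← Finset.sum_mul] at hstar
  -- Step 5: conclude.
  have hprodsplit : ∏ α ∈ Δ.Rplus,
      ((1 - q ^ (ε * ⟪coroot α, μ + Δ.rhok k⟫)) /
        (1 - q ^ (k α) * q ^ (ε * ⟪coroot α, μ + Δ.rhok k⟫)))
      = (∏ α ∈ Δ.Rplus, (1 - q ^ (ε * ⟪coroot α, μ + Δ.rhok k⟫))) /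
        (∏ α ∈ Δ.Rplus, (1 - q ^ (k α) * q ^ (ε * ⟪coroot α, μ + Δ.rhok k⟫))) :=
    Finset.prod_div_distrib _ _
  rw [hprodsplit, mul_div_assoc', eq_div_iff hDne, ← hstar]


end HO
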